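/- arXiv:1405.7148 — 7 statements merged into one kernel-verified Lean document; each statement's English description precedes it below -/
import Mathlib

section
/- In an IP-loop, the identity α(x,y,z)⁻¹ = β(x⁻¹, y⁻¹, z⁻¹) holds, where α(a,b,c) is the unique solution of ab·c = (a·α(a,b,c))·(bc) and β(a,b,c) is the unique solution of c·(ba) = (cb)·(β(a,b,c)·a). -/
universe u

/-- A loop: a quasigroup with identity, given by three binary operations
multiplication `*`, left division `ld` (x \ y) and right division `rd` (x / y). -/
class Loop (Q : Type u) extends Mul Q, One Q where
  ld : Q → Q → Q
  rd : Q → Q → Q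
  rd_mul : ∀ x y : Q, rd (x * y) y = x
  mul_rd : ∀ x y : Q, rd x y * y = x
  ld_mul : ∀ x y : Q, ld x (x * y) = y
  mul_ld : ∀ x y : Q, x * ld x y = y
  one_mul : ∀ x : Q, 1 * x = x
  mul_one : ∀ x : Q, x * 1 = x

namespace Loop

variable {Q : Type u} [Loop Q]

/-- associator of type α: the unique solution of `(a*b)*c = (a*α)*(b*c)`. -/
def aAlpha (a b c : Q) : Q := ld a (rd ((a * b) * c) (b * c))

/-- associator of type β: the unique solution of `c*(b*a) = (c*b)*(β*a)`. -/
def aBeta (a b c : Q) : Q := rd (ld (c * b) (c * (b * a))) a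

/-- commutator `(a,b)`: the unique solution of `a*b = b*(a*(a,b))`. -/
def comm (a b : Q) : Q := ld a (ld b (a * b))

/-- associator `[a,b,c]`: the unique solution of `(a*b)*c = (a*(b*c))*[a,b,c]`. -/
def aMu (a b c : Q) : Q := ld (a * (b * c)) ((a * b) * c)

/-- commutator `[a,b]`: the unique solution of `a*b = (b*a)*[a,b]`. -/
def cMu (a b : Q) : Q := ld (b * a) (a * b)

/-- inverse `x⁻¹ = x \ 1`. -/
def inv (a : Q) : Q := ld a 1

/-- Moufang loop identity. -/
def IsMoufang (Q : Type u) [Loop Q] : Prop :=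
  ∀ x y z : Q, x * (y * (x * z)) = ((x * y) * x) * z

/-- inner mapping T(x) = L(x)⁻¹ R(x). -/
def innerT (x a : Q) : Q := ld x (a * x)
/-- inner mapping R(x,y) = R(xy)⁻¹ R(y) R(x). -/
def innerR (x y a : Q) : Q := rd ((a * x) * y) (x * y)
/-- inner mapping L(x,y) = L(xy)⁻¹ L(x) L(y). -/
def innerL (x y a : Q) : Q := ld (x * y) (x * (y * a))

/-- A subloop: a subset closed under all three operations and containing 1. -/
structure Subloop (Q : Type u) [Loop Q] where
  carrier : Set Q
  one_mem : (1 : Q) ∈ carrier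
  mul_mem : ∀ {x y : Q}, x ∈ carrier → y ∈ carrier → x * y ∈ carrier
  ld_mem : ∀ {x y : Q}, x ∈ carrier → y ∈ carrier → ld x y ∈ carrier
  rd_mem : ∀ {x y : Q}, x ∈ carrier → y ∈ carrier → rd x y ∈ carrier

/-- A subloop is normal iff the generating inner mappings map it onto itself. -/
def IsNormal (H : Subloop Q) : Prop :=
  ∀ x y : Q, innerT x '' H.carrier = H.carrier ∧ innerR x y '' H.carrier = H.carrier ∧
    innerL x y '' H.carrier = H.carrier

/-- Subloop generated by a set. -/
def closure (s : Set Q) : Subloop Q where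
  carrier := {x | ∀ H : Subloop Q, s ⊆ H.carrier → x ∈ H.carrier}
  one_mem := fun H _ => H.one_mem
  mul_mem := fun hx hy H hs => H.mul_mem (hx H hs) (hy H hs)
  ld_mem := fun hx hy H hs => H.ld_mem (hx H hs) (hy H hs)
  rd_mem := fun hx hy H hs => H.rd_mem (hx H hs) (hy H hs)

/-- Centre of a loop: elements of all three nuclei commuting with everything. -/
def center (Q : Type u) [Loop Q] : Set Q :=
  {a | ∀ x y : Q, a * (x * y) = (a * x) * y ∧ x * (a * y) = (x * a) * y ∧
    x * (y * a) = (x * y) * a ∧ a * x = x * a}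

/-- `zeta H` = elements whose associators and commutators with the loop all lie in `H`
(this is `Z_H(Q)`; for `H = {1}` it is the centre, and `N ⊆ zeta K` encodes
`NK/K ⊆ Z(Q/K)`). -/
def zeta (H : Set Q) : Set Q :=
  {a | ∀ x y : Q, aAlpha a x y ∈ H ∧ aBeta a x y ∈ H ∧ comm a x ∈ H}

/-- Upper central series (as sets), `Z_0 = {1}`, `Z_{i+1}/Z_i = Z(Q/Z_i)`. -/
def upperSet (Q : Type u) [Loop Q] : ℕ → Set Q
  | 0 => {1}
  | n + 1 => zeta (upperSet Q n)

/-- The set `α(N,Q,Q) ∪ β(N,Q,Q) ∪ (N,Q)`. -/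
def caSet (N : Set Q) : Set Q :=
  {z | ∃ a ∈ N, ∃ x y : Q, z = aAlpha a x y ∨ z = aBeta a x y ∨ z = comm a x}

/-- Lower central series (as sets): `A_0 = Q`, `A_{n+1} = ⟨α(A_n,Q,Q) ∪ β(A_n,Q,Q) ∪ (A_n,Q)⟩`. -/
def lowerSet (Q : Type u) [Loop Q] : ℕ → Set Q
  | 0 => Set.univ
  | n + 1 => (closure (caSet (lowerSet Q n))).carrier

/-- The set `[N,Q,Q] ∪ [N,Q]` (Moufang / type (μ) version). -/
def caMuSet (N : Set Q) : Set Q :=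
  {z | ∃ a ∈ N, ∃ x y : Q, z = aMu a x y ∨ z = cMu a x}

/-- Lower central series of a Moufang loop: `A_{n+1} = ⟨[A_n,Q,Q] ∪ [A_n,Q]⟩`. -/
def lowerMu (Q : Type u) [Loop Q] : ℕ → Set Q
  | 0 => Set.univ
  | n + 1 => (closure (caMuSet (lowerMu Q n))).carrier

/-- T(x) as a permutation. -/
def innerTEquiv (x : Q) : Equiv.Perm Q where
  toFun := innerT x
  invFun := fun b => rd (x * b) x
  left_inv := fun a => by simp [innerT, mul_ld, rd_mul]
  right_inv := fun b => by simp [innerT, mul_rd, ld_mul]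

/-- R(x,y) as a permutation. -/
def innerREquiv (x y : Q) : Equiv.Perm Q where
  toFun := innerR x y
  invFun := fun b => rd (rd (b * (x * y)) y) x
  left_inv := fun a => by simp [innerR, mul_rd, rd_mul]
  right_inv := fun b => by simp [innerR, mul_rd, rd_mul]

/-- L(x,y) as a permutation. -/
def innerLEquiv (x y : Q) : Equiv.Perm Q where
  toFun := innerL x y
  invFun := fun b => ld y (ld x ((x * y) * b))
  left_inv := fun a => by simp [innerL, mul_ld, ld_mul]
  right_inv := fun b => by simp [innerL, mul_ld, ld_mul]

/-- A-loop: every inner mapping (element of the group generated by the T, R, L maps)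
is an automorphism. -/
def IsALoop (Q : Type u) [Loop Q] : Prop :=
  ∀ φ ∈ Subgroup.closure ({e : Equiv.Perm Q | (∃ x, e = innerTEquiv x) ∨
      (∃ x y, e = innerREquiv x y) ∨ (∃ x y, e = innerLEquiv x y)}),
    ∀ a b : Q, φ (a * b) = φ a * φ b

/-- Loop homomorphism. -/
def IsLoopHom {A : Type u} {B : Type u} [Loop A] [Loop B] (f : A → B) : Prop :=
  (∀ x y : A, f (x * y) = f x * f y) ∧ (∀ x y : A, f (ld x y) = ld (f x) (f y)) ∧
  (∀ x y : A, f (rd x y) = rd (f x) (f y)) ∧ f 1 = 1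

/-- `CAMu M n c`: `c` is a commutator-associator of type (μ) of weight `n`
of elements of `M` (weight 0: elements of `M` themselves). -/
inductive CAMu {Q : Type u} [Loop Q] (M : Set Q) : ℕ → Q → Prop
  | base : ∀ x ∈ M, CAMu M 0 x
  | assoc : ∀ {n : ℕ} {a : Q} (x y : Q), x ∈ M → y ∈ M → CAMu M n a → CAMu M (n + 1) (aMu a x y)
  | commr : ∀ {n : ℕ} {a : Q} (x : Q), x ∈ M → CAMu M n a → CAMu M (n + 1) (cMu a x)

end Loop

open Loop in
/-- in an IP-loop, `α(x,y,z)⁻¹ = β(x⁻¹,y⁻¹,z⁻¹)`. -/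
theorem stmt_1 {Q : Type u} [Loop Q] (inv : Q → Q)
    (h1 : ∀ x y : Q, inv x * (x * y) = y) (h2 : ∀ x y : Q, (y * x) * inv x = y)
    (h3 : ∀ x y : Q, inv (x * y) = inv y * inv x) (h4 : ∀ x : Q, inv (inv x) = x)
    (x y z : Q) :
    inv (aAlpha x y z) = aBeta (inv x) (inv y) (inv z) := by
  have hld : ∀ a b : Q, ld a b = inv a * b := by
    intro a b
    have key : a * (inv a * b) = b := by
      have := h1 (inv a) b; rwa [h4] at this
    calc ld a b = ld a (a * (inv a * b)) := by rw [key]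
      _ = inv a * b := Loop.ld_mul a _
  have hrd : ∀ a b : Q, rd a b = a * inv b := by
    intro a b
    have key : (a * inv b) * b = a := by
      have := h2 (inv b) a; rwa [h4] at this
    calc rd a b = rd ((a * inv b) * b) b := by rw [key]
      _ = a * inv b := Loop.rd_mul _ b
  simp only [aAlpha, aBeta, hld, hrd, h3, h4]
end

section
/- In a Moufang loop Q, for all a, b, c: [a,b,c]⁻¹ = α(a, c⁻¹, b⁻¹) and [a,b,c] = β(a⁻¹, c, b), where [a,b,c] is defined by ab·c = (a·bc)·[a,b,c], and α, β are the associators of types α and β respectively. -/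
universe u

namespace MoufangAux

open Loop

variable {Q : Type u} [Loop Q]

theorem mul_left_cancel {x a b : Q} (h : x * a = x * b) : a = b := by
  rw [← ld_mul x a, h, ld_mul]

theorem mul_inv (x : Q) : x * inv x = 1 := mul_ld x 1

theorem lip (hM : IsMoufang Q) (x y : Q) : inv x * (x * y) = y := by
  have h := hM x (inv x) y
  rw [mul_inv, Loop.one_mul] at h
  exact mul_left_cancel h

theorem inv_mul (hM : IsMoufang Q) (x : Q) : inv x * x = 1 := by
  have := lip hM x 1; rwa [Loop.mul_one] at this

theorem inv_inv (hM : IsMoufang Q) (x : Q) : inv (inv x) = x := by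
  show ld (inv x) 1 = x
  rw [← inv_mul hM x, ld_mul]

theorem lip' (hM : IsMoufang Q) (x y : Q) : x * (inv x * y) = y := by
  have := lip hM (inv x) y; rwa [inv_inv hM] at this

theorem rip (hM : IsMoufang Q) (x y : Q) : (y * x) * inv x = y := by
  have h := hM x (ld x y) (inv x)
  rw [mul_inv, Loop.mul_one, mul_ld] at h
  exact h.symm

theorem rip' (hM : IsMoufang Q) (x y : Q) : (y * inv x) * x = y := by
  have := rip hM (inv x) y; rwa [inv_inv hM] at this

theorem ld_eq (hM : IsMoufang Q) (x y : Q) : ld x y = inv x * y := by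
  apply mul_left_cancel (x := x)
  rw [mul_ld, lip' hM]

theorem mul_inv_rev (hM : IsMoufang Q) (x y : Q) : inv (x * y) = inv y * inv x := by
  set u := inv y * inv x with hu
  have h1 : u * x = inv y := rip' hM x (inv y)
  have h2 : inv u * inv y = x := by
    have := lip hM u x; rwa [h1] at this
  have h3 : x * y = inv u := by
    have := rip' hM y (inv u); rwa [h2] at this
  rw [h3, inv_inv hM]

theorem rightM (hM : IsMoufang Q) (x y z : Q) : ((x * z) * y) * z = x * (z * (y * z)) := by
  have h := hM (inv z) (inv y) (inv x)
  have h2 := congrArg inv h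
  rwa [mul_inv_rev hM, mul_inv_rev hM, mul_inv_rev hM, mul_inv_rev hM, mul_inv_rev hM,
    mul_inv_rev hM, inv_inv hM, inv_inv hM, inv_inv hM] at h2

theorem flex (hM : IsMoufang Q) (x y : Q) : (x * y) * x = x * (y * x) := by
  have := hM x y 1
  rw [Loop.mul_one, Loop.mul_one] at this
  exact this.symm

theorem sharp (hM : IsMoufang Q) (x v w : Q) :
    (v * x) * (inv x * w) = x * ((inv x * v) * w) := by
  have h := hM x (inv x * v) (inv x * w)
  rw [lip' hM, lip' hM] at h
  exact h.symm

theorem sharpInv (hM : IsMoufang Q) (x v w : Q) :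
    inv x * ((x * v) * w) = (v * inv x) * (x * w) := by
  have h := sharp hM (inv x) v w
  rw [inv_inv hM] at h
  exact h.symm

theorem star (hM : IsMoufang Q) (a b c : Q) :
    (b * c) * (aMu a b c * inv a) = b * (c * inv a) := by
  have hmu : aMu a b c = ((inv c * inv b) * inv a) * ((a * b) * c) := by
    rw [aMu, ld_eq hM, mul_inv_rev hM, mul_inv_rev hM]
  rw [hmu]
  rw [rightM hM (inv c * inv b) ((a * b) * c) (inv a)]
  have s2 : inv a * ((a * b) * c) = (b * inv a) * (a * c) := sharpInv hM a b c
  have s4 : inv a * ((a * c) * inv a) = c * inv a := by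
    rw [sharpInv hM a c (inv a), mul_inv, Loop.mul_one]
  have s3 : ((b * inv a) * (a * c)) * inv a = b * (inv a * ((a * c) * inv a)) :=
    rightM hM b (a * c) (inv a)
  have key : inv a * (((a * b) * c) * inv a) = b * (c * inv a) := by
    rw [← flex hM (inv a) ((a * b) * c), s2, s3, s4]
  rw [key, ← mul_inv_rev hM, lip' hM]

theorem starInv (hM : IsMoufang Q) (a b c : Q) :
    (a * inv (aMu a b c)) * (inv c * inv b) = (a * inv c) * inv b := by
  have h := congrArg inv (star hM a b c)
  simp only [mul_inv_rev hM, inv_inv hM] at h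
  exact h

end MoufangAux

open Loop in
/-- in a Moufang loop, `[a,b,c]⁻¹ = α(a,c⁻¹,b⁻¹)` and `[a,b,c] = β(a⁻¹,c,b)`. -/


theorem stmt_2 {Q : Type u} [Loop Q] (hM : IsMoufang Q) (a b c : Q) :
    inv (aMu a b c) = aAlpha a (inv c) (inv b) ∧ aMu a b c = aBeta (inv a) c b := by
  constructor
  · rw [aAlpha, ← MoufangAux.starInv hM a b c, rd_mul, ld_mul]
  · rw [aBeta, ← MoufangAux.star hM a b c, ld_mul, rd_mul]
end

section
/- Let N be a normal subloop of a loop Q. Then the subloop H of Q generated by the set α(N,Q,Q) ∪ β(N,Q,Q) ∪ (N,Q) — i.e., by all associators α(n,x,y), β(n,x,y) with n ∈ N, x,y ∈ Q and all commutators (n,x) with n ∈ N, x ∈ Q — is a normal subloop of Q contained in N. -/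
universe u

open Loop in
/-- for a normal subloop `N`, the subloop generated by
`α(N,Q,Q) ∪ β(N,Q,Q) ∪ (N,Q)` is normal and contained in `N`. -/
theorem stmt_4 {Q : Type u} [Loop Q] (N : Subloop Q) (hN : IsNormal N) :
    IsNormal (closure (caSet N.carrier)) ∧
    (closure (caSet N.carrier)).carrier ⊆ N.carrier := by
  -- generating set is contained in N
  have hSN : caSet N.carrier ⊆ N.carrier := by
    rintro z ⟨a, ha, x, y, h | h | h⟩ <;> subst h
    · have h1 : innerR x y a ∈ N.carrier := by
        rw [← (hN x y).2.1]; exact ⟨a, ha, rfl⟩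
      exact N.ld_mem ha h1
    · have h1 : innerL y x a ∈ N.carrier := by
        rw [← (hN y x).2.2]; exact ⟨a, ha, rfl⟩
      exact N.rd_mem h1 ha
    · have h1 : innerT x a ∈ N.carrier := by
        rw [← (hN x x).1]; exact ⟨a, ha, rfl⟩
      exact N.ld_mem ha h1
  have hKN : (closure (caSet N.carrier)).carrier ⊆ N.carrier := fun z hz => hz N hSN
  have hSK : caSet N.carrier ⊆ (closure (caSet N.carrier)).carrier :=
    fun z hz H hs => hs hz
  set K := closure (caSet N.carrier) with hK
  -- the key identities
  have hT : ∀ (x m : Q), innerT x m = m * Loop.comm m x := by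
    intro x m; simp [innerT, Loop.comm, mul_ld]
  have hR : ∀ (x y m : Q), innerR x y m = m * aAlpha m x y := by
    intro x y m; simp [innerR, aAlpha, mul_ld]
  have hL : ∀ (x y m : Q), innerL x y m = aBeta m y x * m := by
    intro x y m; simp [innerL, aBeta, mul_rd]
  -- generator membership helpers
  have genC : ∀ m z : Q, m ∈ N.carrier → Loop.comm m z ∈ K.carrier :=
    fun m z hm => hSK ⟨m, hm, z, z, Or.inr (Or.inr rfl)⟩
  have genA : ∀ m x y : Q, m ∈ N.carrier → aAlpha m x y ∈ K.carrier :=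
    fun m x y hm => hSK ⟨m, hm, x, y, Or.inl rfl⟩
  have genB : ∀ m x y : Q, m ∈ N.carrier → aBeta m x y ∈ K.carrier :=
    fun m x y hm => hSK ⟨m, hm, x, y, Or.inr (Or.inl rfl)⟩
  refine ⟨fun x y => ⟨?_, ?_, ?_⟩, hKN⟩
  · -- T(x) '' K = K
    apply Set.eq_of_subset_of_subset
    · rintro m ⟨m', hm', rfl⟩
      rw [hT]
      exact K.mul_mem hm' (genC m' x (hKN hm'))
    · intro m hm
      obtain ⟨m', hm'N, heq⟩ : m ∈ innerT x '' N.carrier := by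
        rw [(hN x x).1]; exact hKN hm
      refine ⟨m', ?_, heq⟩
      have hme : m = m' * Loop.comm m' x := by rw [← hT, heq]
      have : rd m (Loop.comm m' x) = m' := by rw [hme, rd_mul]
      rw [← this]
      exact K.rd_mem hm (genC m' x hm'N)
  · -- R(x,y) '' K = K
    apply Set.eq_of_subset_of_subset
    · rintro m ⟨m', hm', rfl⟩
      rw [hR]
      exact K.mul_mem hm' (genA m' x y (hKN hm'))
    · intro m hm
      obtain ⟨m', hm'N, heq⟩ : m ∈ innerR x y '' N.carrier := by
        rw [(hN x y).2.1]; exact hKN hm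
      refine ⟨m', ?_, heq⟩
      have hme : m = m' * aAlpha m' x y := by rw [← hR, heq]
      have : rd m (aAlpha m' x y) = m' := by rw [hme, rd_mul]
      rw [← this]
      exact K.rd_mem hm (genA m' x y hm'N)
  · -- L(x,y) '' K = K
    apply Set.eq_of_subset_of_subset
    · rintro m ⟨m', hm', rfl⟩
      rw [hL]
      exact K.mul_mem (genB m' y x (hKN hm')) hm'
    · intro m hm
      obtain ⟨m', hm'N, heq⟩ : m ∈ innerL x y '' N.carrier := by
        rw [(hN x y).2.2]; exact hKN hm
      refine ⟨m', ?_, heq⟩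
      have hme : m = aBeta m' y x * m' := by rw [← hL, heq]
      have : ld (aBeta m' y x) m = m' := by rw [hme, ld_mul]
      rw [← this]
      exact K.ld_mem (genB m' y x hm'N) hm
end

section
/- Let H be a normal subloop of a loop Q and define Z_H(Q) = {a ∈ Q : α(a,x,y) ∈ H, β(a,x,y) ∈ H, (a,x) ∈ H for all x,y ∈ Q}. Then Z_H(Q) is a normal subloop of Q containing H; moreover, any subloop N of Q with H ⊆ N ⊆ Z_H(Q) is normal in Q. -/
universe u

namespace StmtSeven
open Loop

variable {Q : Type u} [Loop Q]

theorem mulLeftCancel {a x y : Q} (h : a * x = a * y) : x = y := by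
  have h2 := congrArg (ld a) h
  rwa [ld_mul, ld_mul] at h2

theorem mulRightCancel {a x y : Q} (h : x * a = y * a) : x = y := by
  have h2 := congrArg (fun z => rd z a) h
  simpa only [rd_mul] using h2

theorem ld_self (a : Q) : ld a a = 1 :=
  mulLeftCancel (by rw [mul_ld, Loop.mul_one])

theorem one_ld (b : Q) : ld 1 b = b := by
  have h := mul_ld (1 : Q) b
  rwa [Loop.one_mul] at h

section Center

variable {Q' : Type u} [Loop Q']

theorem centL {a : Q'} (ha : a ∈ center Q') (x y : Q') : a * (x * y) = (a * x) * y := (ha x y).1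
theorem centM {a : Q'} (ha : a ∈ center Q') (x y : Q') : x * (a * y) = (x * a) * y := (ha x y).2.1
theorem centR {a : Q'} (ha : a ∈ center Q') (x y : Q') : x * (y * a) = (x * y) * a := (ha x y).2.2.1
theorem centC {a : Q'} (ha : a ∈ center Q') (x : Q') : a * x = x * a := (ha x x).2.2.2

theorem one_mem_center : (1 : Q') ∈ center Q' := by
  intro x y
  refine ⟨?_, ?_, ?_, ?_⟩ <;> simp only [Loop.one_mul, Loop.mul_one]

theorem pl1 {a : Q'} (ha : a ∈ center Q') (x z : Q') : x * ld a z = ld a (x * z) := by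
  apply mulLeftCancel (a := a)
  rw [mul_ld]
  calc a * (x * ld a z) = (a * x) * ld a z := centL ha ..
    _ = (x * a) * ld a z := by rw [centC ha x]
    _ = x * (a * ld a z) := (centM ha ..).symm
    _ = x * z := by rw [mul_ld]

theorem pl2 {a : Q'} (ha : a ∈ center Q') (w y : Q') : (ld a w) * y = ld a (w * y) := by
  apply mulLeftCancel (a := a)
  rw [mul_ld, centL ha, mul_ld]

theorem pr1 {b : Q'} (hb : b ∈ center Q') (x z : Q') : x * rd z b = rd (x * z) b := by
  apply mulRightCancel (a := b)
  rw [mul_rd, ← centR hb, mul_rd]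

theorem pr2 {b : Q'} (hb : b ∈ center Q') (z y : Q') : (rd z b) * y = rd (z * y) b := by
  apply mulRightCancel (a := b)
  calc ((rd z b) * y) * b = (rd z b) * (y * b) := (centR hb ..).symm
    _ = (rd z b) * (b * y) := by rw [centC hb]
    _ = ((rd z b) * b) * y := centM hb ..
    _ = z * y := by rw [mul_rd]
  rw [mul_rd]

theorem center_mul_mem {a b : Q'} (ha : a ∈ center Q') (hb : b ∈ center Q') :
    a * b ∈ center Q' := by
  intro x y
  refine ⟨?_, ?_, ?_, ?_⟩
  · calc (a * b) * (x * y) = a * (b * (x * y)) := (centL ha ..).symm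
      _ = a * ((b * x) * y) := by rw [centL hb]
      _ = (a * (b * x)) * y := centL ha ..
      _ = ((a * b) * x) * y := by rw [centL ha]
  · calc x * ((a * b) * y) = x * (a * (b * y)) := by rw [centL ha]
      _ = (x * a) * (b * y) := centM ha ..
      _ = ((x * a) * b) * y := centM hb ..
      _ = (x * (a * b)) * y := by rw [centM ha]
  · calc x * (y * (a * b)) = x * ((y * a) * b) := by rw [centR hb]
      _ = (x * (y * a)) * b := centR hb ..
      _ = ((x * y) * a) * b := by rw [centR ha]
      _ = (x * y) * (a * b) := (centR hb ..).symm
  · calc (a * b) * x = a * (b * x) := (centL ha ..).symm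
      _ = a * (x * b) := by rw [centC hb]
      _ = (a * x) * b := centR hb ..
      _ = (x * a) * b := by rw [centC ha]
      _ = x * (a * b) := (centR hb ..).symm

theorem center_ld_mem {a b : Q'} (ha : a ∈ center Q') (hb : b ∈ center Q') :
    ld a b ∈ center Q' := by
  intro x y
  refine ⟨?_, ?_, ?_, ?_⟩
  · calc (ld a b) * (x * y) = ld a (b * (x * y)) := pl2 ha ..
      _ = ld a ((b * x) * y) := by rw [centL hb]
      _ = (ld a (b * x)) * y := (pl2 ha ..).symm
      _ = ((ld a b) * x) * y := by rw [pl2 ha b x]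
  · calc x * ((ld a b) * y) = x * ld a (b * y) := by rw [pl2 ha]
      _ = ld a (x * (b * y)) := pl1 ha ..
      _ = ld a ((x * b) * y) := by rw [centM hb]
      _ = (ld a (x * b)) * y := (pl2 ha ..).symm
      _ = (x * (ld a b)) * y := by rw [pl1 ha]
  · calc x * (y * (ld a b)) = x * ld a (y * b) := by rw [pl1 ha]
      _ = ld a (x * (y * b)) := pl1 ha ..
      _ = ld a ((x * y) * b) := by rw [centR hb]
      _ = (x * y) * (ld a b) := (pl1 ha ..).symm
  · calc (ld a b) * x = ld a (b * x) := pl2 ha ..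
      _ = ld a (x * b) := by rw [centC hb]
      _ = x * (ld a b) := (pl1 ha ..).symm

theorem center_rd_mem {a b : Q'} (ha : a ∈ center Q') (hb : b ∈ center Q') :
    rd a b ∈ center Q' := by
  intro x y
  refine ⟨?_, ?_, ?_, ?_⟩
  · calc (rd a b) * (x * y) = rd (a * (x * y)) b := pr2 hb ..
      _ = rd ((a * x) * y) b := by rw [centL ha]
      _ = (rd (a * x) b) * y := (pr2 hb ..).symm
      _ = ((rd a b) * x) * y := by rw [pr2 hb a x]
  · calc x * ((rd a b) * y) = x * rd (a * y) b := by rw [pr2 hb]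
      _ = rd (x * (a * y)) b := pr1 hb ..
      _ = rd ((x * a) * y) b := by rw [centM ha]
      _ = (rd (x * a) b) * y := (pr2 hb ..).symm
      _ = (x * (rd a b)) * y := by rw [pr1 hb]
  · calc x * (y * (rd a b)) = x * rd (y * a) b := by rw [pr1 hb]
      _ = rd (x * (y * a)) b := pr1 hb ..
      _ = rd ((x * y) * a) b := by rw [centR ha]
      _ = (x * y) * (rd a b) := (pr1 hb ..).symm
  · calc (rd a b) * x = rd (a * x) b := pr2 hb ..
      _ = rd (x * a) b := by rw [centC ha]
      _ = x * (rd a b) := (pr1 hb ..).symm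

/-- the six inner-map formulas fix central elements -/
theorem fixT {c : Q'} (hc : c ∈ center Q') (x : Q') : ld x (c * x) = c := by
  rw [centC hc, ld_mul]
theorem fixTinv {c : Q'} (hc : c ∈ center Q') (x : Q') : rd (x * c) x = c := by
  rw [← centC hc, rd_mul]
theorem fixR {c : Q'} (hc : c ∈ center Q') (x y : Q') : rd ((c * x) * y) (x * y) = c := by
  rw [← centL hc, rd_mul]
theorem fixRinv {c : Q'} (hc : c ∈ center Q') (x y : Q') :
    rd (rd (c * (x * y)) y) x = c := by
  rw [centL hc, rd_mul, rd_mul]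
theorem fixL {c : Q'} (hc : c ∈ center Q') (x y : Q') : ld (x * y) (x * (y * c)) = c := by
  rw [centR hc, ld_mul]
theorem fixLinv {c : Q'} (hc : c ∈ center Q') (x y : Q') :
    ld y (ld x ((x * y) * c)) = c := by
  rw [← centR hc, ld_mul, ld_mul]

end Center


section NormalCosets

variable {Q : Type u} [Loop Q] (H : Subloop Q) (hH : IsNormal H)

/-- the congruence relation `a ∈ bH`. -/
def hrel (a b : Q) : Prop := ld b a ∈ H.carrier

theorem hrel_iff {a b : Q} : hrel H a b ↔ ∃ h ∈ H.carrier, a = b * h :=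
  ⟨fun h => ⟨ld b a, h, (mul_ld b a).symm⟩,
   fun ⟨h, hh, e⟩ => by subst e; show ld b (b * h) ∈ H.carrier; rw [ld_mul]; exact hh⟩

variable {H}
include hH

theorem A1 (x : Q) {h : Q} (hh : h ∈ H.carrier) : ∃ k ∈ H.carrier, h * x = x * k := by
  refine ⟨innerT x h, ?_, ?_⟩
  · rw [← (hH x x).1]; exact ⟨h, hh, rfl⟩
  · rw [innerT, mul_ld]

theorem A2 (x : Q) {h : Q} (hh : h ∈ H.carrier) : ∃ k ∈ H.carrier, x * h = k * x := by
  have h1 : h ∈ innerT x '' H.carrier := by rw [(hH x x).1]; exact hh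
  obtain ⟨k, hk, e⟩ := h1
  exact ⟨k, hk, by rw [← e, innerT, mul_ld]⟩

theorem B1 (x y : Q) {h : Q} (hh : h ∈ H.carrier) :
    ∃ k ∈ H.carrier, (h * x) * y = k * (x * y) := by
  refine ⟨innerR x y h, ?_, ?_⟩
  · rw [← (hH x y).2.1]; exact ⟨h, hh, rfl⟩
  · rw [innerR, mul_rd]

theorem B2 (x y : Q) {h : Q} (hh : h ∈ H.carrier) :
    ∃ k ∈ H.carrier, h * (x * y) = (k * x) * y := by
  have h1 : h ∈ innerR x y '' H.carrier := by rw [(hH x y).2.1]; exact hh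
  obtain ⟨k, hk, e⟩ := h1
  exact ⟨k, hk, by rw [← e, innerR, mul_rd]⟩

theorem C1 (x y : Q) {h : Q} (hh : h ∈ H.carrier) :
    ∃ k ∈ H.carrier, x * (y * h) = (x * y) * k := by
  refine ⟨innerL x y h, ?_, ?_⟩
  · rw [← (hH x y).2.2]; exact ⟨h, hh, rfl⟩
  · rw [innerL, mul_ld]

theorem C2 (x y : Q) {h : Q} (hh : h ∈ H.carrier) :
    ∃ k ∈ H.carrier, (x * y) * h = x * (y * k) := by
  have h1 : h ∈ innerL x y '' H.carrier := by rw [(hH x y).2.2]; exact hh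
  obtain ⟨k, hk, e⟩ := h1
  exact ⟨k, hk, by rw [← e, innerL, mul_ld]⟩

/-- `x * (h * y) ∈ (xH)y` -/
theorem M1 (x y : Q) {h : Q} (hh : h ∈ H.carrier) :
    ∃ k ∈ H.carrier, x * (h * y) = (x * k) * y := by
  obtain ⟨h1, hh1, e1⟩ := A1 hH y hh
  obtain ⟨h2, hh2, e2⟩ := C1 hH x y hh1
  obtain ⟨h3, hh3, e3⟩ := A2 hH (x * y) hh2
  obtain ⟨h4, hh4, e4⟩ := B2 hH x y hh3
  obtain ⟨h5, hh5, e5⟩ := A1 hH x hh4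
  exact ⟨h5, hh5, by rw [e1, e2, e3, e4, e5]⟩

theorem hrel_refl (a : Q) : hrel H a a := by
  rw [hrel]; rw [ld_self]; exact H.one_mem

theorem coset_right {a b : Q} (hab : hrel H a b) {k : Q} (hk : k ∈ H.carrier) :
    ∃ m ∈ H.carrier, a * k = b * m := by
  obtain ⟨h, hh, e⟩ := (hrel_iff H).1 hab
  obtain ⟨k1, hk1, e1⟩ := C2 hH b h hk
  exact ⟨h * k1, H.mul_mem hh hk1, by rw [e, e1]⟩

theorem coset_left {a b : Q} (hab : hrel H a b) {k : Q} (hk : k ∈ H.carrier) :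
    ∃ m ∈ H.carrier, b * k = a * m := by
  obtain ⟨h, hh, e⟩ := (hrel_iff H).1 hab
  obtain ⟨k1, hk1, e1⟩ := C1 hH b h (H.ld_mem hh hk)
  refine ⟨k1, hk1, ?_⟩
  rw [← e] at e1
  rw [← e1, mul_ld]

theorem hrel_symm {a b : Q} (hab : hrel H a b) : hrel H b a := by
  obtain ⟨m, hm, e⟩ := coset_left hH hab H.one_mem
  rw [Loop.mul_one] at e
  exact (hrel_iff H).2 ⟨m, hm, e⟩

theorem hrel_trans {a b c : Q} (hab : hrel H a b) (hbc : hrel H b c) : hrel H a c := by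
  obtain ⟨h, hh, e⟩ := (hrel_iff H).1 hab
  obtain ⟨k, hk, e'⟩ := (hrel_iff H).1 hbc
  obtain ⟨m, hm, e1⟩ := C2 hH c k hh
  exact (hrel_iff H).2 ⟨k * m, H.mul_mem hk hm, by rw [e, e', e1]⟩

/-- if `u * h = v * k` with `h, k ∈ H` then `u ∈ vH`. -/
theorem hrel_of_mul_eq {u v h k : Q} (hh : h ∈ H.carrier) (hk : k ∈ H.carrier)
    (e : u * h = v * k) : hrel H u v := by
  have huh : hrel H (u * h) u := (hrel_iff H).2 ⟨h, hh, rfl⟩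
  obtain ⟨m, hm, e1⟩ := coset_left hH huh H.one_mem
  rw [Loop.mul_one, e] at e1
  obtain ⟨m2, hm2, e2⟩ := C2 hH v k hm
  exact (hrel_iff H).2 ⟨k * m2, H.mul_mem hk hm2, by rw [e1, e2]⟩

theorem hrel_mul {a a' b b' : Q} (ha : hrel H a a') (hb : hrel H b b') :
    hrel H (a * b) (a' * b') := by
  obtain ⟨h, hh, ea⟩ := (hrel_iff H).1 ha
  obtain ⟨k, hk, eb⟩ := (hrel_iff H).1 hb
  obtain ⟨k1, hk1, e1⟩ := C1 hH (a' * h) b' hk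
  obtain ⟨h2, hh2, e2⟩ := A2 hH a' hh
  obtain ⟨h3, hh3, e3⟩ := B1 hH a' b' hh2
  obtain ⟨h4, hh4, e4⟩ := A1 hH (a' * b') hh3
  obtain ⟨h5, hh5, e5⟩ := C2 hH (a' * b') h4 hk1
  refine (hrel_iff H).2 ⟨h4 * h5, H.mul_mem hh4 hh5, ?_⟩
  rw [ea, eb, e1, e2, e3, e4, e5]

theorem hrel_ld {a a' b b' : Q} (ha : hrel H a a') (hb : hrel H b b') :
    hrel H (ld a b) (ld a' b') := by
  obtain ⟨h, hh, ea⟩ := (hrel_iff H).1 ha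
  obtain ⟨m, hm, eb⟩ := (hrel_iff H).1 hb
  -- a * ld a b = b = b' * m = (a' * ld a' b') * m
  obtain ⟨h2, hh2, e2⟩ := A2 hH a' hh
  obtain ⟨h3, hh3, e3⟩ := B1 hH a' (ld a b) hh2
  obtain ⟨h4, hh4, e4⟩ := A1 hH (a' * ld a b) hh3
  have key : (a' * ld a b) * h4 = (a' * ld a' b') * m :=
    calc (a' * ld a b) * h4 = h3 * (a' * ld a b) := e4.symm
      _ = (h2 * a') * ld a b := e3.symm
      _ = (a' * h) * ld a b := by rw [e2]
      _ = a * ld a b := by rw [← ea]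
      _ = b := mul_ld a b
      _ = b' * m := eb
      _ = (a' * ld a' b') * m := by rw [mul_ld]
  have h6 := hrel_of_mul_eq hH hh4 hm key
  obtain ⟨h7, hh7, e7⟩ := (hrel_iff H).1 h6
  obtain ⟨h8, hh8, e8⟩ := C2 hH a' (ld a' b') hh7
  refine (hrel_iff H).2 ⟨h8, hh8, mulLeftCancel (a := a') ?_⟩
  rw [e7, e8]

theorem hrel_rd {a a' b b' : Q} (ha : hrel H a a') (hb : hrel H b b') :
    hrel H (rd b a) (rd b' a') := by
  obtain ⟨h, hh, ea⟩ := (hrel_iff H).1 ha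
  obtain ⟨m, hm, eb⟩ := (hrel_iff H).1 hb
  -- (rd b a) * a = b,  (rd b' a') * a' = b'
  obtain ⟨h2, hh2, e2⟩ := C1 hH (rd b a) a' hh
  have key : ((rd b a) * a') * h2 = ((rd b' a') * a') * m :=
    calc ((rd b a) * a') * h2 = rd b a * (a' * h) := e2.symm
      _ = rd b a * a := by rw [← ea]
      _ = b := mul_rd b a
      _ = b' * m := eb
      _ = ((rd b' a') * a') * m := by rw [mul_rd]
  have h6 := hrel_of_mul_eq hH hh2 hm key
  obtain ⟨h7, hh7, e7⟩ := (hrel_iff H).1 h6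
  obtain ⟨n1, hn1, f1⟩ := C2 hH (rd b' a') a' hh7
  obtain ⟨n2, hn2, f2⟩ := A2 hH a' hn1
  obtain ⟨n4, hn4, f4⟩ := M1 hH (rd b' a') a' hn2
  refine (hrel_iff H).2 ⟨n4, hn4, mulRightCancel (a := a') ?_⟩
  rw [e7, f1, f2, f4]

end NormalCosets
section QuotientLoop

variable {Q : Type u} [Loop Q] (H : Subloop Q) (hH : IsNormal H)

def hsetoid : Setoid Q :=
  ⟨hrel H, ⟨hrel_refl hH, fun h => hrel_symm hH h, fun h h' => hrel_trans hH h h'⟩⟩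

def QMod (H : Subloop Q) (hH : IsNormal H) : Type u := Quotient (hsetoid H hH)

instance qLoop : Loop (QMod H hH) where
  mul := fun q r => Quotient.liftOn₂ q r (fun a b => Quotient.mk (hsetoid H hH) (a * b))
    (fun _ _ _ _ h1 h2 => Quotient.sound (hrel_mul hH h1 h2))
  one := Quotient.mk (hsetoid H hH) 1
  ld := fun q r => Quotient.liftOn₂ q r (fun a b => Quotient.mk (hsetoid H hH) (ld a b))
    (fun _ _ _ _ h1 h2 => Quotient.sound (hrel_ld hH h1 h2))
  rd := fun q r => Quotient.liftOn₂ q r (fun a b => Quotient.mk (hsetoid H hH) (rd a b))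
    (fun _ _ _ _ h1 h2 => Quotient.sound (hrel_rd hH h2 h1))
  rd_mul := fun q r => Quotient.inductionOn₂ q r fun x y => congrArg _ (rd_mul x y)
  mul_rd := fun q r => Quotient.inductionOn₂ q r fun x y => congrArg _ (mul_rd x y)
  ld_mul := fun q r => Quotient.inductionOn₂ q r fun x y => congrArg _ (ld_mul x y)
  mul_ld := fun q r => Quotient.inductionOn₂ q r fun x y => congrArg _ (mul_ld x y)
  one_mul := fun q => Quotient.inductionOn q fun x => congrArg _ (Loop.one_mul x)
  mul_one := fun q => Quotient.inductionOn q fun x => congrArg _ (Loop.mul_one x)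

/-- canonical projection -/
def qmk (a : Q) : QMod H hH := Quotient.mk (hsetoid H hH) a

theorem qmk_mul (a b : Q) : qmk H hH (a * b) = qmk H hH a * qmk H hH b := rfl
theorem qmk_ld (a b : Q) : qmk H hH (ld a b) = ld (qmk H hH a) (qmk H hH b) := rfl
theorem qmk_rd (a b : Q) : qmk H hH (rd a b) = rd (qmk H hH a) (qmk H hH b) := rfl
theorem qmk_one : qmk H hH 1 = 1 := rfl

theorem qmk_eq_iff {a b : Q} : qmk H hH a = qmk H hH b ↔ hrel H a b :=
  ⟨Quotient.exact, fun h => Quotient.sound (s := hsetoid H hH) h⟩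

theorem qmk_eq_of_mem {a b : Q} {h : Q} (hh : h ∈ H.carrier) (e : a = b * h) :
    qmk H hH a = qmk H hH b :=
  (qmk_eq_iff H hH).2 ((hrel_iff H).2 ⟨h, hh, e⟩)

theorem qmk_surjective : Function.Surjective (qmk H hH) := fun q =>
  Quotient.inductionOn q fun a => ⟨a, rfl⟩

end QuotientLoop
section ZetaCenter

variable {Q : Type u} [Loop Q] (H : Subloop Q) (hH : IsNormal H)
include hH

theorem qL {a : Q} (hz : a ∈ zeta H.carrier) (x y : Q) :
    qmk H hH ((a * x) * y) = qmk H hH (a * (x * y)) := by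
  have hα := (hz x y).1
  have e0 : (a * aAlpha a x y) * (x * y) = (a * x) * y := by
    rw [aAlpha, mul_ld, mul_rd]
  obtain ⟨k, hk, e1⟩ := A2 hH a hα
  obtain ⟨k1, hk1, e2⟩ := B1 hH a (x * y) hk
  obtain ⟨k2, hk2, e3⟩ := A1 hH (a * (x * y)) hk1
  exact qmk_eq_of_mem H hH hk2 (by rw [← e0, e1, e2, e3])

theorem qR {a : Q} (hz : a ∈ zeta H.carrier) (x y : Q) :
    qmk H hH (x * (y * a)) = qmk H hH ((x * y) * a) := by
  have hβ := (hz y x).2.1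
  have e0 : (x * y) * (aBeta a y x * a) = x * (y * a) := by
    rw [aBeta, mul_rd, mul_ld]
  obtain ⟨k, hk, e1⟩ := A1 hH a hβ
  obtain ⟨k1, hk1, e2⟩ := C1 hH (x * y) a hk
  exact qmk_eq_of_mem H hH hk1 (by rw [← e0, e1, e2])

theorem qC {a : Q} (hz : a ∈ zeta H.carrier) (x : Q) :
    qmk H hH (a * x) = qmk H hH (x * a) := by
  have ht := (hz x x).2.2
  have e0 : x * (a * comm a x) = a * x := by
    rw [Loop.comm, mul_ld, mul_ld]
  obtain ⟨k, hk, e1⟩ := C1 hH x a ht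
  exact qmk_eq_of_mem H hH hk (by rw [← e0, e1])

theorem central_of_zeta {a : Q} (hz : a ∈ zeta H.carrier) :
    qmk H hH a ∈ center (QMod H hH) := by
  have hL : ∀ u v : QMod H hH, qmk H hH a * (u * v) = (qmk H hH a * u) * v := fun u v =>
    Quotient.inductionOn₂ u v fun x y => (qL H hH hz x y).symm
  have hR : ∀ u v : QMod H hH, u * (v * qmk H hH a) = (u * v) * qmk H hH a := fun u v =>
    Quotient.inductionOn₂ u v fun x y => qR H hH hz x y
  have hC : ∀ u : QMod H hH, qmk H hH a * u = u * qmk H hH a := fun u =>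
    Quotient.inductionOn u fun x => qC H hH hz x
  intro u v
  refine ⟨hL u v, ?_, hR u v, hC u⟩
  calc u * (qmk H hH a * v) = u * (v * qmk H hH a) := by rw [hC v]
    _ = (u * v) * qmk H hH a := hR u v
    _ = qmk H hH a * (u * v) := (hC _).symm
    _ = (qmk H hH a * u) * v := hL u v
    _ = (u * qmk H hH a) * v := by rw [hC u]

theorem zeta_of_central {a : Q} (hc : qmk H hH a ∈ center (QMod H hH)) :
    a ∈ zeta H.carrier := by
  intro x y
  refine ⟨?_, ?_, ?_⟩
  · have e : hrel H ((a * x) * y) (a * (x * y)) :=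
      Quotient.exact (centL hc (qmk H hH x) (qmk H hH y)).symm
    obtain ⟨h, hh, e1⟩ := (hrel_iff H).1 e
    obtain ⟨h1, hh1, f1⟩ := C2 hH a (x * y) hh
    obtain ⟨h2, hh2, f2⟩ := A2 hH (x * y) hh1
    obtain ⟨h3, hh3, f3⟩ := M1 hH a (x * y) hh2
    have key : rd ((a * x) * y) (x * y) = a * h3 := by
      rw [e1, f1, f2, f3, rd_mul]
    rw [aAlpha, key, ld_mul]
    exact hh3
  · have e : hrel H (y * (x * a)) ((y * x) * a) :=
      Quotient.exact (centR hc (qmk H hH y) (qmk H hH x))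
    obtain ⟨h, hh, e1⟩ := (hrel_iff H).1 e
    obtain ⟨h1, hh1, f1⟩ := C2 hH (y * x) a hh
    obtain ⟨h2, hh2, f2⟩ := A2 hH a hh1
    have key : ld (y * x) (y * (x * a)) = h2 * a := by
      rw [e1, f1, f2, ld_mul]
    rw [aBeta, key, rd_mul]
    exact hh2
  · have e : hrel H (a * x) (x * a) :=
      Quotient.exact (centC hc (qmk H hH x))
    obtain ⟨h, hh, e1⟩ := (hrel_iff H).1 e
    obtain ⟨h1, hh1, f1⟩ := C2 hH x a hh
    have key : ld x (a * x) = a * h1 := by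
      rw [e1, f1, ld_mul]
    rw [Loop.comm, key, ld_mul]
    exact hh1

theorem qmk_eq_one_of_mem {h : Q} (hh : h ∈ H.carrier) : qmk H hH h = 1 :=
  qmk_eq_of_mem H hH hh (Loop.one_mul h).symm

theorem H_subset_zeta : H.carrier ⊆ zeta H.carrier := fun h hh =>
  zeta_of_central H hH (by rw [qmk_eq_one_of_mem H hH hh]; exact one_mem_center)

theorem main_normal (N : Subloop Q) (hHN : H.carrier ⊆ N.carrier)
    (hNZ : N.carrier ⊆ zeta H.carrier) : IsNormal N := by
  have hmemN : ∀ {u n : Q}, n ∈ N.carrier → qmk H hH u = qmk H hH n → u ∈ N.carrier := by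
    intro u n hn e
    obtain ⟨h, hh, e1⟩ := (hrel_iff H).1 ((qmk_eq_iff H hH).1 e)
    rw [e1]; exact N.mul_mem hn (hHN hh)
  have hcent : ∀ {n : Q}, n ∈ N.carrier → qmk H hH n ∈ center (QMod H hH) := fun hn =>
    central_of_zeta H hH (hNZ hn)
  intro x y
  refine ⟨?_, ?_, ?_⟩
  · apply Set.Subset.antisymm
    · rintro _ ⟨n, hn, rfl⟩
      exact hmemN hn (fixT (hcent hn) (qmk H hH x))
    · intro n hn
      refine ⟨rd (x * n) x, hmemN hn (fixTinv (hcent hn) (qmk H hH x)), ?_⟩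
      rw [innerT, mul_rd, ld_mul]
  · apply Set.Subset.antisymm
    · rintro _ ⟨n, hn, rfl⟩
      exact hmemN hn (fixR (hcent hn) (qmk H hH x) (qmk H hH y))
    · intro n hn
      refine ⟨rd (rd (n * (x * y)) y) x,
        hmemN hn (fixRinv (hcent hn) (qmk H hH x) (qmk H hH y)), ?_⟩
      rw [innerR, mul_rd, mul_rd, rd_mul]
  · apply Set.Subset.antisymm
    · rintro _ ⟨n, hn, rfl⟩
      exact hmemN hn (fixL (hcent hn) (qmk H hH x) (qmk H hH y))
    · intro n hn
      refine ⟨ld y (ld x ((x * y) * n)),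
        hmemN hn (fixLinv (hcent hn) (qmk H hH x) (qmk H hH y)), ?_⟩
      rw [innerL, mul_ld, mul_ld, ld_mul]

def zsub : Subloop Q where
  carrier := zeta H.carrier
  one_mem := zeta_of_central H hH (by rw [qmk_one]; exact one_mem_center)
  mul_mem := fun ha hb => zeta_of_central H hH (by
    rw [qmk_mul]
    exact center_mul_mem (central_of_zeta H hH ha) (central_of_zeta H hH hb))
  ld_mem := fun ha hb => zeta_of_central H hH (by
    rw [qmk_ld]
    exact center_ld_mem (central_of_zeta H hH ha) (central_of_zeta H hH hb))
  rd_mem := fun ha hb => zeta_of_central H hH (by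
    rw [qmk_rd]
    exact center_rd_mem (central_of_zeta H hH ha) (central_of_zeta H hH hb))

end ZetaCenter
end StmtSeven
open Loop in
/-- for a normal subloop `H`, `Z_H(Q) = zeta H` is a normal subloop
containing `H`, and any subloop `N` with `H ⊆ N ⊆ Z_H(Q)` is normal. -/
theorem stmt_7 {Q : Type u} [Loop Q] (H : Subloop Q) (hH : IsNormal H) :
    (∃ Z : Subloop Q, Z.carrier = zeta H.carrier ∧ IsNormal Z) ∧
    H.carrier ⊆ zeta H.carrier ∧
    (∀ N : Subloop Q, H.carrier ⊆ N.carrier → N.carrier ⊆ zeta H.carrier →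
      IsNormal N) :=
  ⟨⟨StmtSeven.zsub H hH, rfl,
    StmtSeven.main_normal H hH (StmtSeven.zsub H hH)
      (StmtSeven.H_subset_zeta H hH) (fun _ h => h)⟩,
   StmtSeven.H_subset_zeta H hH,
   fun N h1 h2 => StmtSeven.main_normal H hH N h1 h2⟩
end

section
/- Let N be a normal subloop of a loop Q and let A^N(Q) be the subloop generated by α(N,Q,Q) ∪ β(N,Q,Q) ∪ (N,Q). Then A^N(Q) is normal in Q, and any subloop H with A^N(Q) ⊆ H ⊆ N is normal in Q. -/
universe u

open Loop in
theorem aux_key {Q : Type u} [Loop Q] (N : Subloop Q) (hN : IsNormal N)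
    (H : Subloop Q) (hCH : caSet N.carrier ⊆ H.carrier)
    (hHN : H.carrier ⊆ N.carrier) : IsNormal H := by
  intro x y
  refine ⟨?_, ?_, ?_⟩
  · apply Set.Subset.antisymm
    · rintro _ ⟨a, ha, rfl⟩
      have hc : comm a x ∈ H.carrier := hCH ⟨a, hHN ha, x, 1, Or.inr (Or.inr rfl)⟩
      have h1 : innerT x a = a * comm a x := by
        simp [innerT, Loop.comm, Loop.mul_ld]
      rw [h1]; exact H.mul_mem ha hc
    · intro b hb
      have hbN : b ∈ innerT x '' N.carrier := (hN x y).1.symm ▸ hHN hb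
      obtain ⟨a, haN, hab⟩ := hbN
      have hc : comm a x ∈ H.carrier := hCH ⟨a, haN, x, 1, Or.inr (Or.inr rfl)⟩
      have h1 : innerT x a = a * comm a x := by
        simp [innerT, Loop.comm, Loop.mul_ld]
      have hba : b = a * comm a x := by rw [← hab, h1]
      have haH : a ∈ H.carrier := by
        have : Loop.rd b (comm a x) = a := by rw [hba, Loop.rd_mul]
        rw [← this]; exact H.rd_mem hb hc
      exact ⟨a, haH, hab⟩
  · apply Set.Subset.antisymm
    · rintro _ ⟨a, ha, rfl⟩
      have hc : aAlpha a x y ∈ H.carrier := hCH ⟨a, hHN ha, x, y, Or.inl rfl⟩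
      have h1 : innerR x y a = a * aAlpha a x y := by
        simp [innerR, aAlpha, Loop.mul_ld]
      rw [h1]; exact H.mul_mem ha hc
    · intro b hb
      have hbN : b ∈ innerR x y '' N.carrier := (hN x y).2.1.symm ▸ hHN hb
      obtain ⟨a, haN, hab⟩ := hbN
      have hc : aAlpha a x y ∈ H.carrier := hCH ⟨a, haN, x, y, Or.inl rfl⟩
      have h1 : innerR x y a = a * aAlpha a x y := by
        simp [innerR, aAlpha, Loop.mul_ld]
      have hba : b = a * aAlpha a x y := by rw [← hab, h1]
      have haH : a ∈ H.carrier := by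
        have : Loop.rd b (aAlpha a x y) = a := by rw [hba, Loop.rd_mul]
        rw [← this]; exact H.rd_mem hb hc
      exact ⟨a, haH, hab⟩
  · apply Set.Subset.antisymm
    · rintro _ ⟨a, ha, rfl⟩
      have hc : aBeta a y x ∈ H.carrier := hCH ⟨a, hHN ha, y, x, Or.inr (Or.inl rfl)⟩
      have h1 : innerL x y a = aBeta a y x * a := by
        simp [innerL, aBeta, Loop.mul_rd]
      rw [h1]; exact H.mul_mem hc ha
    · intro b hb
      have hbN : b ∈ innerL x y '' N.carrier := (hN x y).2.2.symm ▸ hHN hb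
      obtain ⟨a, haN, hab⟩ := hbN
      have hc : aBeta a y x ∈ H.carrier := hCH ⟨a, haN, y, x, Or.inr (Or.inl rfl)⟩
      have h1 : innerL x y a = aBeta a y x * a := by
        simp [innerL, aBeta, Loop.mul_rd]
      have hba : b = aBeta a y x * a := by rw [← hab, h1]
      have haH : a ∈ H.carrier := by
        have : Loop.ld (aBeta a y x) b = a := by rw [hba, Loop.ld_mul]
        rw [← this]; exact H.ld_mem hc hb
      exact ⟨a, haH, hab⟩

open Loop in
/-- for a normal subloop `N`, `A^N(Q) = ⟨α(N,Q,Q) ∪ β(N,Q,Q) ∪ (N,Q)⟩`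
is normal in `Q`, and any subloop `H` with `A^N(Q) ⊆ H ⊆ N` is normal in `Q`. -/
theorem stmt_8 {Q : Type u} [Loop Q] (N : Subloop Q) (hN : IsNormal N) :
    IsNormal (closure (caSet N.carrier)) ∧
    (∀ H : Subloop Q, (closure (caSet N.carrier)).carrier ⊆ H.carrier →
      H.carrier ⊆ N.carrier → IsNormal H) := by
  have hsub : caSet N.carrier ⊆ (closure (caSet N.carrier)).carrier :=
    fun z hz K hK => hK hz
  have hclN : (closure (caSet N.carrier)).carrier ⊆ N.carrier := by
    intro z hz
    apply hz N
    rintro _ ⟨a, ha, x, y, (rfl | rfl | rfl)⟩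
    · have hR : innerR x y a ∈ N.carrier := by
        rw [← (hN x y).2.1]; exact ⟨a, ha, rfl⟩
      have : aAlpha a x y = Loop.ld a (innerR x y a) := rfl
      rw [this]; exact N.ld_mem ha hR
    · have hL : innerL y x a ∈ N.carrier := by
        rw [← (hN y x).2.2]; exact ⟨a, ha, rfl⟩
      have : aBeta a x y = Loop.rd (innerL y x a) a := rfl
      rw [this]; exact N.rd_mem hL ha
    · have hT : innerT x a ∈ N.carrier := by
        rw [← (hN x x).1]; exact ⟨a, ha, rfl⟩
      have : comm a x = Loop.ld a (innerT x a) := rfl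
      rw [this]; exact N.ld_mem ha hT
  refine ⟨aux_key N hN _ hsub hclN, fun H h1 h2 =>
    aux_key N hN H (fun z hz => h1 (hsub hz)) h2⟩
end

section
/- A loop Q is centrally nilpotent of class n (its lower central series reaches 1 in exactly n steps) if and only if its upper central series reaches Q in exactly n steps. -/
universe u

namespace Loop

variable {Q : Type u} [Loop Q]

lemma ld_self' (x : Q) : ld x x = 1 := by
  have := ld_mul x (1:Q); rwa [mul_one] at this

lemma rd_self' (x : Q) : rd x x = 1 := by
  have := rd_mul (1:Q) x; rwa [one_mul] at this

lemma mul_left_cancel' {a b c : Q} (h : a * b = a * c) : b = c := by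
  have h2 : ld a (a*b) = ld a (a*c) := by rw [h]
  rwa [ld_mul, ld_mul] at h2

lemma mul_right_cancel' {a b c : Q} (h : a * b = c * b) : a = c := by
  have h2 : rd (a*b) b = rd (c*b) b := by rw [h]
  rwa [rd_mul, rd_mul] at h2

section Normal

variable (H : Subloop Q)

/-- congruence modulo `H` -/
def rel (a b : Q) : Prop := ∃ h ∈ H.carrier, a = b * h

variable {H}

lemma rel_refl (a : Q) : rel H a a := ⟨1, H.one_mem, (mul_one a).symm⟩

lemma mem_of_rel_one {a : Q} (h : rel H a 1) : a ∈ H.carrier := by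
  obtain ⟨k, hk, hek⟩ := h; rwa [hek, one_mul]

lemma rel_one_of_mem {a : Q} (h : a ∈ H.carrier) : rel H a 1 :=
  ⟨a, h, (one_mul a).symm⟩

variable (hN : IsNormal H)
include hN

/-- h * x = x * h' -/
lemma n2 {h : Q} (hh : h ∈ H.carrier) (x : Q) : ∃ h' ∈ H.carrier, h * x = x * h' := by
  refine ⟨innerT x h, ?_, ?_⟩
  · rw [← (hN x x).1]; exact ⟨h, hh, rfl⟩
  · rw [innerT, mul_ld]

/-- x * h = h' * x -/
lemma n1 {h : Q} (hh : h ∈ H.carrier) (x : Q) : ∃ h' ∈ H.carrier, x * h = h' * x := by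
  have : h ∈ innerT x '' H.carrier := by rw [(hN x x).1]; exact hh
  obtain ⟨h', hh', he⟩ := this
  refine ⟨h', hh', ?_⟩
  rw [innerT] at he
  have := congrArg (x * ·) he
  simpa [mul_ld] using this.symm

/-- (h*x)*y = h'*(x*y) -/
lemma n3 {h : Q} (hh : h ∈ H.carrier) (x y : Q) : ∃ h' ∈ H.carrier, (h*x)*y = h'*(x*y) := by
  refine ⟨innerR x y h, ?_, ?_⟩
  · rw [← (hN x y).2.1]; exact ⟨h, hh, rfl⟩
  · rw [innerR, mul_rd]

/-- h*(x*y) = (h'*x)*y -/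
lemma n4 {h : Q} (hh : h ∈ H.carrier) (x y : Q) : ∃ h' ∈ H.carrier, h*(x*y) = (h'*x)*y := by
  have : h ∈ innerR x y '' H.carrier := by rw [(hN x y).2.1]; exact hh
  obtain ⟨h', hh', he⟩ := this
  refine ⟨h', hh', ?_⟩
  rw [innerR] at he
  have := congrArg (· * (x*y)) he
  simpa [mul_rd] using this.symm

/-- x*(y*h) = (x*y)*h' -/
lemma n5 {h : Q} (hh : h ∈ H.carrier) (x y : Q) : ∃ h' ∈ H.carrier, x*(y*h) = (x*y)*h' := by
  refine ⟨innerL x y h, ?_, ?_⟩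
  · rw [← (hN x y).2.2]; exact ⟨h, hh, rfl⟩
  · rw [innerL, mul_ld]

/-- (x*y)*h = x*(y*h') -/
lemma n6 {h : Q} (hh : h ∈ H.carrier) (x y : Q) : ∃ h' ∈ H.carrier, (x*y)*h = x*(y*h') := by
  have : h ∈ innerL x y '' H.carrier := by rw [(hN x y).2.2]; exact hh
  obtain ⟨h', hh', he⟩ := this
  refine ⟨h', hh', ?_⟩
  rw [innerL] at he
  have := congrArg ((x*y) * ·) he
  simpa [mul_ld] using this.symm

/-- x*(h*y) = (x*h')*y -/
lemma n7 {h : Q} (hh : h ∈ H.carrier) (x y : Q) : ∃ h' ∈ H.carrier, x*(h*y) = (x*h')*y := by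
  obtain ⟨h2, hh2, e2⟩ := n2 hN hh y
  obtain ⟨h3, hh3, e3⟩ := n5 hN hh2 x y
  obtain ⟨h4, hh4, e4⟩ := n1 hN hh3 (x*y)
  obtain ⟨h5, hh5, e5⟩ := n4 hN hh4 x y
  obtain ⟨h6, hh6, e6⟩ := n2 hN hh5 x
  exact ⟨h6, hh6, by rw [e2, e3, e4, e5, e6]⟩

lemma rel_symm {a b : Q} (h : rel H a b) : rel H b a := by
  obtain ⟨k, hk, he⟩ := h
  have hk1 : ld k 1 ∈ H.carrier := H.ld_mem hk H.one_mem
  obtain ⟨k', hk', e⟩ := n5 hN hk1 b k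
  refine ⟨k', hk', ?_⟩
  rw [he, ← e, mul_ld, mul_one]

lemma rel_trans {a b c : Q} (h1 : rel H a b) (h2 : rel H b c) : rel H a c := by
  obtain ⟨k, hk, e1⟩ := h1
  obtain ⟨m, hm, e2⟩ := h2
  obtain ⟨k', hk', e3⟩ := n6 hN hk c m
  exact ⟨m * k', H.mul_mem hm hk', by rw [e1, e2, e3]⟩

lemma rel_mul {a b c d : Q} (h1 : rel H a b) (h2 : rel H c d) : rel H (a*c) (b*d) := by
  obtain ⟨h, hh, e1⟩ := h1
  obtain ⟨k, hk, e2⟩ := h2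
  -- (b*h)*(d*k) = ((b*h)*d)*k1
  obtain ⟨k1, hk1, e3⟩ := n5 hN hk (b*h) d
  -- b*h = h1*b
  obtain ⟨h1', hh1, e4⟩ := n1 hN hh b
  -- (h1*b)*d = h2*(b*d)
  obtain ⟨h2', hh2, e5⟩ := n3 hN hh1 b d
  -- (h2*(b*d))*k1 = h3*((b*d)*k1)
  obtain ⟨h3, hh3, e6⟩ := n3 hN hh2 (b*d) k1
  -- h3*((b*d)*k1) = ((b*d)*k1)*h4
  obtain ⟨h4, hh4, e7⟩ := n2 hN hh3 ((b*d)*k1)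
  -- ((b*d)*k1)*h4 = (b*d)*(k1*h5)
  obtain ⟨h5, hh5, e8⟩ := n6 hN hh4 (b*d) k1
  refine ⟨k1 * h5, H.mul_mem hk1 hh5, ?_⟩
  rw [e1, e2, e3, e4, e5, e6, e7, e8]

lemma rel_cancel_left {a u v : Q} (h : rel H (a*u) (a*v)) : rel H u v := by
  obtain ⟨k, hk, e⟩ := h
  obtain ⟨k', hk', e2⟩ := n6 hN hk a v
  exact ⟨k', hk', mul_left_cancel' (by rw [e, e2])⟩

lemma rel_cancel_right {a u v : Q} (h : rel H (u*a) (v*a)) : rel H u v := by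
  obtain ⟨k, hk, e⟩ := h
  obtain ⟨k1, hk1, e1⟩ := n6 hN hk v a
  obtain ⟨k2, hk2, e2⟩ := n1 hN hk1 a
  obtain ⟨k3, hk3, e3⟩ := n7 hN hk2 v a
  exact ⟨k3, hk3, mul_right_cancel' (by rw [e, e1, e2, e3])⟩

lemma rel_ld {a b c d : Q} (h1 : rel H a b) (h2 : rel H c d) :
    rel H (ld a c) (ld b d) := by
  apply rel_cancel_left hN (a := a)
  have e1 : a * ld a c = c := mul_ld a c
  have e2 : b * ld b d = d := mul_ld b d
  rw [e1]
  have h3 : rel H (b * ld b d) (a * ld b d) := rel_mul hN (rel_symm hN h1) (rel_refl _)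
  rw [e2] at h3
  exact rel_trans hN h2 h3

lemma rel_rd {a b c d : Q} (h1 : rel H a b) (h2 : rel H c d) :
    rel H (rd a c) (rd b d) := by
  apply rel_cancel_right hN (a := c)
  have e1 : rd a c * c = a := mul_rd a c
  have e2 : rd b d * d = b := mul_rd b d
  rw [e1]
  have h3 : rel H (rd b d * d) (rd b d * c) := rel_mul hN (rel_refl _) (rel_symm hN h2)
  rw [e2] at h3
  exact rel_trans hN h1 h3

/-- centrality modulo `H` -/
def Cent (H : Subloop Q) (a : Q) : Prop := ∀ x y : Q,
  rel H ((a*x)*y) (a*(x*y)) ∧ rel H (x*(y*a)) ((x*y)*a) ∧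
  rel H (x*(a*y)) ((x*a)*y) ∧ rel H (a*x) (x*a)

lemma zeta_eq_cent : zeta H.carrier = {a | Cent H a} := by
  ext a
  constructor
  · intro ha
    intro x y
    have hcommgen : ∀ z : Q, rel H (a*z) (z*a) := by
      intro z
      have hc : comm a z ∈ H.carrier := (ha z z).2.2
      have e1 : a * comm a z = ld z (a*z) := by rw [comm, mul_ld]
      have e2 : z * (a * comm a z) = a * z := by rw [e1, mul_ld]
      have : rel H (a * comm a z) a := ⟨comm a z, hc, rfl⟩
      have := rel_mul hN (rel_refl z) this
      rw [e2] at this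
      exact this
    have hleft : ∀ x y : Q, rel H ((a*x)*y) (a*(x*y)) := by
      intro x y
      have hc : aAlpha a x y ∈ H.carrier := (ha x y).1
      have e1 : a * aAlpha a x y = rd ((a*x)*y) (x*y) := by rw [aAlpha, mul_ld]
      have e2 : (a * aAlpha a x y) * (x*y) = (a*x)*y := by rw [e1, mul_rd]
      have : rel H (a * aAlpha a x y) a := ⟨aAlpha a x y, hc, rfl⟩
      have := rel_mul hN this (rel_refl (x*y))
      rw [e2] at this
      exact this
    have hright : ∀ x y : Q, rel H (x*(y*a)) ((x*y)*a) := by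
      intro x y
      have hc : aBeta a y x ∈ H.carrier := (ha y x).2.1
      have e1 : aBeta a y x * a = ld (x*y) (x*(y*a)) := by rw [aBeta, mul_rd]
      have e2 : (x*y) * (aBeta a y x * a) = x*(y*a) := by rw [e1, mul_ld]
      obtain ⟨h2, hh2, eh⟩ := n2 hN hc a
      have : rel H (aBeta a y x * a) a := by rw [eh]; exact ⟨h2, hh2, rfl⟩
      have := rel_mul hN (rel_refl (x*y)) this
      rw [e2] at this
      exact this
    refine ⟨hleft x y, hright x y, ?_, hcommgen x⟩
    -- middle: x*(a*y) ~ (x*a)*y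
    have c1 : rel H (x*(a*y)) (x*(y*a)) := rel_mul hN (rel_refl x) (hcommgen y)
    have c2 : rel H (x*(a*y)) ((x*y)*a) := rel_trans hN c1 (hright x y)
    have c3 : rel H ((x*a)*y) ((a*x)*y) := rel_mul hN (rel_symm hN (hcommgen x)) (rel_refl y)
    have c4 : rel H ((x*a)*y) ((x*y)*a) :=
      rel_trans hN c3 (rel_trans hN (hleft x y) (hcommgen (x*y)))
    exact rel_trans hN c2 (rel_symm hN c4)
  · intro ha x y
    obtain ⟨hl, hr, hm, hc⟩ := ha x y
    refine ⟨?_, ?_, ?_⟩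
    · -- aAlpha a x y ∈ H
      have r1 : rel H (rd ((a*x)*y) (x*y)) (rd (a*(x*y)) (x*y)) :=
        rel_rd hN hl (rel_refl _)
      rw [rd_mul] at r1
      obtain ⟨h, hh, e⟩ := r1
      have : aAlpha a x y = h := by rw [aAlpha, e, ld_mul]
      rw [this]; exact hh
    · -- aBeta a x y ∈ H
      have hr' : rel H (y*(x*a)) ((y*x)*a) := (ha y x).2.1
      have r1 : rel H (ld (y*x) (y*(x*a))) (ld (y*x) ((y*x)*a)) :=
        rel_ld hN (rel_refl _) hr'
      rw [ld_mul] at r1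
      obtain ⟨h, hh, e⟩ := r1
      have r2 : rel H (rd (a*h) a) (rd a a) := rel_rd hN ⟨h, hh, rfl⟩ (rel_refl a)
      rw [rd_self'] at r2
      have : aBeta a x y = rd (a*h) a := by rw [aBeta, e]
      rw [this]; exact mem_of_rel_one r2
    · -- comm a x ∈ H
      have hc' := (ha x x).2.2.2
      have r1 : rel H (ld x (a*x)) (ld x (x*a)) := rel_ld hN (rel_refl x) hc'
      rw [ld_mul] at r1
      obtain ⟨h, hh, e⟩ := r1
      have : comm a x = h := by rw [comm, e, ld_mul]
      rw [this]; exact hh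

lemma cent_left {a : Q} (ha : Cent H a) (x y : Q) : rel H ((a*x)*y) (a*(x*y)) := (ha x y).1
lemma cent_right {a : Q} (ha : Cent H a) (x y : Q) : rel H (x*(y*a)) ((x*y)*a) := (ha x y).2.1
lemma cent_mid {a : Q} (ha : Cent H a) (x y : Q) : rel H (x*(a*y)) ((x*a)*y) := (ha x y).2.2.1
lemma cent_comm {a : Q} (ha : Cent H a) (x : Q) : rel H (a*x) (x*a) := (ha x x).2.2.2

/-- move a central element inward: a*(z*w) ~ z*(a*w) -/
lemma cent_move {a : Q} (ha : Cent H a) (z w : Q) : rel H (a*(z*w)) (z*(a*w)) := by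
  have c1 : rel H (a*(z*w)) ((a*z)*w) := rel_symm hN (cent_left hN ha z w)
  have c2 : rel H ((a*z)*w) ((z*a)*w) := rel_mul hN (cent_comm hN ha z) (rel_refl w)
  have c3 : rel H ((z*a)*w) (z*(a*w)) := rel_symm hN (cent_mid hN ha z w)
  exact rel_trans hN c1 (rel_trans hN c2 c3)

lemma cent_rel {a b : Q} (hab : rel H a b) (hb : Cent H b) : Cent H a := by
  intro x y
  have hmx : ∀ z : Q, rel H (a*z) (b*z) := fun z => rel_mul hN hab (rel_refl z)
  have hxm : ∀ z : Q, rel H (z*a) (z*b) := fun z => rel_mul hN (rel_refl z) hab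
  refine ⟨?_, ?_, ?_, ?_⟩
  · refine rel_trans hN (rel_mul hN (hmx x) (rel_refl y)) ?_
    refine rel_trans hN (cent_left hN hb x y) ?_
    exact rel_symm hN (hmx (x*y))
  · refine rel_trans hN (rel_mul hN (rel_refl x) (hxm y)) ?_
    refine rel_trans hN (cent_right hN hb x y) ?_
    exact rel_symm hN (hxm (x*y))
  · refine rel_trans hN (rel_mul hN (rel_refl x) (hmx y)) ?_
    refine rel_trans hN (cent_mid hN hb x y) ?_
    exact rel_symm hN (rel_mul hN (hxm x) (rel_refl y))
  · exact rel_trans hN (hmx x) (rel_trans hN (cent_comm hN hb x) (rel_symm hN (hxm x)))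

lemma cent_one : Cent H (1 : Q) := by
  intro x y
  simp only [one_mul, mul_one]
  exact ⟨rel_refl _, rel_refl _, rel_refl _, rel_refl _⟩

lemma cent_mul {a b : Q} (ha : Cent H a) (hb : Cent H b) : Cent H (a*b) := by
  intro x y
  refine ⟨?_, ?_, ?_, ?_⟩
  · -- ((ab)x)y ~ (ab)(xy)
    have c1 : rel H ((a*b)*x) (a*(b*x)) := rel_symm hN (cent_mid hN hb a x)
    have c2 : rel H (((a*b)*x)*y) ((a*(b*x))*y) := rel_mul hN c1 (rel_refl y)
    have c3 : rel H ((a*(b*x))*y) (a*((b*x)*y)) := cent_left hN ha (b*x) y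
    have c4 : rel H (a*((b*x)*y)) (a*(b*(x*y))) :=
      rel_mul hN (rel_refl a) (cent_left hN hb x y)
    have c5 : rel H (a*(b*(x*y))) ((a*b)*(x*y)) := cent_mid hN hb a (x*y)
    exact rel_trans hN c2 (rel_trans hN c3 (rel_trans hN c4 c5))
  · -- x(y(ab)) ~ (xy)(ab)
    have c1 : rel H (y*(a*b)) ((y*a)*b) := cent_right hN hb y a
    have c2 : rel H (x*(y*(a*b))) (x*((y*a)*b)) := rel_mul hN (rel_refl x) c1
    have c3 : rel H (x*((y*a)*b)) ((x*(y*a))*b) := cent_right hN hb x (y*a)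
    have c35 : rel H (x*(y*a)) ((x*y)*a) := cent_right hN ha x y
    have c4 : rel H ((x*(y*a))*b) (((x*y)*a)*b) := rel_mul hN c35 (rel_refl b)
    have c5 : rel H (((x*y)*a)*b) ((x*y)*(a*b)) := rel_symm hN (cent_right hN hb (x*y) a)
    exact rel_trans hN c2 (rel_trans hN c3 (rel_trans hN c4 c5))
  · -- x((ab)y) ~ (x(ab))y
    have c1 : rel H ((a*b)*y) (a*(b*y)) := rel_symm hN (cent_mid hN hb a y)
    have c2 : rel H (x*((a*b)*y)) (x*(a*(b*y))) := rel_mul hN (rel_refl x) c1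
    have c3 : rel H (x*(a*(b*y))) ((x*a)*(b*y)) := cent_mid hN ha x (b*y)
    have c4 : rel H ((x*a)*(b*y)) (((x*a)*b)*y) := cent_mid hN hb (x*a) y
    have c5 : rel H (((x*a)*b)*y) ((x*(a*b))*y) :=
      rel_mul hN (rel_symm hN (cent_right hN hb x a)) (rel_refl y)
    exact rel_trans hN c2 (rel_trans hN c3 (rel_trans hN c4 c5))
  · -- (ab)x ~ x(ab)
    have c1 : rel H ((a*b)*x) (a*(b*x)) := rel_symm hN (cent_mid hN hb a x)
    have c2 : rel H (a*(b*x)) (a*(x*b)) := rel_mul hN (rel_refl a) (cent_comm hN hb x)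
    have c3 : rel H (a*(x*b)) ((a*x)*b) := rel_symm hN (cent_left hN ha x b)
    have c4 : rel H ((a*x)*b) ((x*a)*b) := rel_mul hN (cent_comm hN ha x) (rel_refl b)
    have c5 : rel H ((x*a)*b) (x*(a*b)) := rel_symm hN (cent_right hN hb x a)
    exact rel_trans hN c1 (rel_trans hN c2 (rel_trans hN c3 (rel_trans hN c4 c5)))
lemma cent_ld {a b : Q} (ha : Cent H a) (hb : Cent H b) : Cent H (ld a b) := by
  set c := ld a b with hcdef
  have e : a * c = b := mul_ld a b
  intro x y
  refine ⟨?_, ?_, ?_, ?_⟩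
  · -- left
    apply rel_cancel_left hN (a := a)
    have l1 : rel H (a*((c*x)*y)) ((a*(c*x))*y) := rel_symm hN (cent_left hN ha (c*x) y)
    have l2 : rel H (a*(c*x)) ((a*c)*x) := rel_symm hN (cent_left hN ha c x)
    rw [e] at l2
    have l3 : rel H ((a*(c*x))*y) ((b*x)*y) := rel_mul hN l2 (rel_refl y)
    have l4 : rel H ((b*x)*y) (b*(x*y)) := cent_left hN hb x y
    have r1 : rel H (a*(c*(x*y))) ((a*c)*(x*y)) := rel_symm hN (cent_left hN ha c (x*y))
    rw [e] at r1
    exact rel_trans hN (rel_trans hN l1 (rel_trans hN l3 l4)) (rel_symm hN r1)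
  · -- right
    apply rel_cancel_left hN (a := a)
    have l1 : rel H (a*(x*(y*c))) (x*(a*(y*c))) := cent_move hN ha x (y*c)
    have l2 : rel H (a*(y*c)) (y*(a*c)) := cent_move hN ha y c
    rw [e] at l2
    have l3 : rel H (x*(a*(y*c))) (x*(y*b)) := rel_mul hN (rel_refl x) l2
    have l4 : rel H (x*(y*b)) ((x*y)*b) := cent_right hN hb x y
    have r1 : rel H (a*((x*y)*c)) ((x*y)*(a*c)) := cent_move hN ha (x*y) c
    rw [e] at r1
    exact rel_trans hN (rel_trans hN l1 (rel_trans hN l3 l4)) (rel_symm hN r1)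
  · -- mid
    apply rel_cancel_left hN (a := a)
    have l1 : rel H (a*(x*(c*y))) (x*(a*(c*y))) := cent_move hN ha x (c*y)
    have l2 : rel H (a*(c*y)) ((a*c)*y) := rel_symm hN (cent_left hN ha c y)
    rw [e] at l2
    have l3 : rel H (x*(a*(c*y))) (x*(b*y)) := rel_mul hN (rel_refl x) l2
    have l4 : rel H (x*(b*y)) ((x*b)*y) := cent_mid hN hb x y
    have r1 : rel H (a*((x*c)*y)) ((a*(x*c))*y) := rel_symm hN (cent_left hN ha (x*c) y)
    have r2 : rel H (a*(x*c)) (x*(a*c)) := cent_move hN ha x c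
    rw [e] at r2
    have r3 : rel H ((a*(x*c))*y) ((x*b)*y) := rel_mul hN r2 (rel_refl y)
    exact rel_trans hN (rel_trans hN l1 (rel_trans hN l3 l4))
      (rel_symm hN (rel_trans hN r1 r3))
  · -- comm
    apply rel_cancel_left hN (a := a)
    have l1 : rel H (a*(c*x)) ((a*c)*x) := rel_symm hN (cent_left hN ha c x)
    rw [e] at l1
    have l2 : rel H (b*x) (x*b) := cent_comm hN hb x
    have r1 : rel H (a*(x*c)) (x*(a*c)) := cent_move hN ha x c
    rw [e] at r1
    exact rel_trans hN (rel_trans hN l1 l2) (rel_symm hN r1)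

lemma cent_rd {a b : Q} (ha : Cent H a) (hb : Cent H b) : Cent H (rd a b) := by
  set c := rd a b with hcdef
  have e : c * b = a := mul_rd a b
  have key : ∀ z : Q, rel H (b*(c*z)) (a*z) := by
    intro z
    have l1 : rel H (b*(c*z)) ((b*c)*z) := rel_symm hN (cent_left hN hb c z)
    have l2 : rel H (b*c) (c*b) := cent_comm hN hb c
    rw [e] at l2
    exact rel_trans hN l1 (rel_mul hN l2 (rel_refl z))
  have keybc : rel H (b*c) a := by
    have := cent_comm hN hb c; rwa [e] at this
  intro x y
  refine ⟨?_, ?_, ?_, ?_⟩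
  · -- left
    apply rel_cancel_left hN (a := b)
    have l1 : rel H (b*((c*x)*y)) ((b*(c*x))*y) := rel_symm hN (cent_left hN hb (c*x) y)
    have l2 : rel H ((b*(c*x))*y) ((a*x)*y) := rel_mul hN (key x) (rel_refl y)
    have l3 : rel H ((a*x)*y) (a*(x*y)) := cent_left hN ha x y
    have r1 : rel H (b*(c*(x*y))) (a*(x*y)) := key (x*y)
    exact rel_trans hN (rel_trans hN l1 (rel_trans hN l2 l3)) (rel_symm hN r1)
  · -- right
    apply rel_cancel_left hN (a := b)
    have l1 : rel H (b*(x*(y*c))) (x*(b*(y*c))) := cent_move hN hb x (y*c)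
    have l2 : rel H (b*(y*c)) (y*(b*c)) := cent_move hN hb y c
    have l3 : rel H (y*(b*c)) (y*a) := rel_mul hN (rel_refl y) keybc
    have l4 : rel H (x*(b*(y*c))) (x*(y*a)) :=
      rel_mul hN (rel_refl x) (rel_trans hN l2 l3)
    have l5 : rel H (x*(y*a)) ((x*y)*a) := cent_right hN ha x y
    have r1 : rel H (b*((x*y)*c)) ((x*y)*(b*c)) := cent_move hN hb (x*y) c
    have r2 : rel H ((x*y)*(b*c)) ((x*y)*a) := rel_mul hN (rel_refl (x*y)) keybc
    exact rel_trans hN (rel_trans hN l1 (rel_trans hN l4 l5))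
      (rel_symm hN (rel_trans hN r1 r2))
  · -- mid
    apply rel_cancel_left hN (a := b)
    have l1 : rel H (b*(x*(c*y))) (x*(b*(c*y))) := cent_move hN hb x (c*y)
    have l2 : rel H (x*(b*(c*y))) (x*(a*y)) := rel_mul hN (rel_refl x) (key y)
    have l3 : rel H (x*(a*y)) ((x*a)*y) := cent_mid hN ha x y
    have r1 : rel H (b*((x*c)*y)) ((b*(x*c))*y) := rel_symm hN (cent_left hN hb (x*c) y)
    have r2 : rel H (b*(x*c)) (x*(b*c)) := cent_move hN hb x c
    have r3 : rel H (x*(b*c)) (x*a) := rel_mul hN (rel_refl x) keybc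
    have r4 : rel H ((b*(x*c))*y) ((x*a)*y) := rel_mul hN (rel_trans hN r2 r3) (rel_refl y)
    exact rel_trans hN (rel_trans hN l1 (rel_trans hN l2 l3))
      (rel_symm hN (rel_trans hN r1 r4))
  · -- comm
    apply rel_cancel_left hN (a := b)
    have l1 : rel H (b*(c*x)) (a*x) := key x
    have l2 : rel H (a*x) (x*a) := cent_comm hN ha x
    have r1 : rel H (b*(x*c)) (x*(b*c)) := cent_move hN hb x c
    have r2 : rel H (x*(b*c)) (x*a) := rel_mul hN (rel_refl x) keybc
    exact rel_trans hN (rel_trans hN l1 l2) (rel_symm hN (rel_trans hN r1 r2))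

/-- `Z(Q/H)` pulled back to `Q`, as a subloop. -/
def centSubloop (hN : IsNormal H) : Subloop Q where
  carrier := {a | Cent H a}
  one_mem := cent_one hN
  mul_mem := fun hx hy => cent_mul hN hx hy
  ld_mem := fun hx hy => cent_ld hN hx hy
  rd_mem := fun hx hy => cent_rd hN hx hy

lemma centSubloop_carrier : (centSubloop hN).carrier = zeta H.carrier :=
  (zeta_eq_cent hN).symm

lemma centSubloop_normal : IsNormal (centSubloop hN) := by
  intro x y
  refine ⟨?_, ?_, ?_⟩
  · ext b
    constructor
    · rintro ⟨a, haC, rfl⟩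
      have r1 : rel H (innerT x a) a := by
        have := rel_ld hN (rel_refl x) (cent_comm hN haC x)
        rwa [ld_mul] at this
      exact cent_rel hN r1 haC
    · intro hb
      refine ⟨rd (x*b) x, ?_, ?_⟩
      · have r1 : rel H (rd (x*b) x) b := by
          have := rel_rd hN (rel_symm hN (cent_comm hN hb x)) (rel_refl x)
          rwa [rd_mul] at this
        exact cent_rel hN r1 hb
      · show innerT x (rd (x*b) x) = b
        rw [innerT, mul_rd, ld_mul]
  · ext b
    constructor
    · rintro ⟨a, haC, rfl⟩
      have r1 : rel H (innerR x y a) a := by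
        have := rel_rd hN (cent_left hN haC x y) (rel_refl (x*y))
        rwa [rd_mul] at this
      exact cent_rel hN r1 haC
    · intro hb
      refine ⟨rd (rd (b*(x*y)) y) x, ?_, ?_⟩
      · have r1 : rel H (rd (b*(x*y)) y) (b*x) := by
          have := rel_rd hN (rel_symm hN (cent_left hN hb x y)) (rel_refl y)
          rwa [rd_mul] at this
        have r2 : rel H (rd (rd (b*(x*y)) y) x) b := by
          have := rel_rd hN r1 (rel_refl x)
          rwa [rd_mul] at this
        exact cent_rel hN r2 hb
      · show innerR x y (rd (rd (b*(x*y)) y) x) = b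
        rw [innerR, mul_rd, mul_rd, rd_mul]
  · ext b
    constructor
    · rintro ⟨a, haC, rfl⟩
      have r1 : rel H (innerL x y a) a := by
        have := rel_ld hN (rel_refl (x*y)) (cent_right hN haC x y)
        rwa [ld_mul] at this
      exact cent_rel hN r1 haC
    · intro hb
      refine ⟨ld y (ld x ((x*y)*b)), ?_, ?_⟩
      · have r1 : rel H (ld x ((x*y)*b)) (y*b) := by
          have := rel_ld hN (rel_refl x) (rel_symm hN (cent_right hN hb x y))
          rwa [ld_mul] at this
        have r2 : rel H (ld y (ld x ((x*y)*b))) b := by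
          have := rel_ld hN (rel_refl y) r1
          rwa [ld_mul] at this
        exact cent_rel hN r2 hb
      · show innerL x y (ld y (ld x ((x*y)*b))) = b
        rw [innerL, mul_ld, mul_ld, ld_mul]

end Normal

/-- the trivial subloop `{1}`. -/
def oneSubloop (Q : Type u) [Loop Q] : Subloop Q where
  carrier := {1}
  one_mem := rfl
  mul_mem := by
    rintro x y (rfl : x = 1) (rfl : y = 1)
    show (1 : Q) * 1 = 1
    rw [mul_one]
  ld_mem := by
    rintro x y (rfl : x = 1) (rfl : y = 1)
    show ld (1 : Q) 1 = 1
    rw [ld_self']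
  rd_mem := by
    rintro x y (rfl : x = 1) (rfl : y = 1)
    show rd (1 : Q) 1 = 1
    rw [rd_self']

lemma oneSubloop_normal : IsNormal (oneSubloop Q) := by
  intro x y
  refine ⟨?_, ?_, ?_⟩
  · show innerT x '' {1} = {1}
    rw [Set.image_singleton, innerT, one_mul, ld_self']
  · show innerR x y '' {1} = {1}
    rw [Set.image_singleton, innerR, one_mul, rd_self']
  · show innerL x y '' {1} = {1}
    rw [Set.image_singleton, innerL, mul_one, ld_self']

lemma upper_exists (Q : Type u) [Loop Q] :
    ∀ n : ℕ, ∃ S : Subloop Q, S.carrier = upperSet Q n ∧ IsNormal S := by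
  intro n
  induction n with
  | zero => exact ⟨oneSubloop Q, rfl, oneSubloop_normal⟩
  | succ n ih =>
    obtain ⟨S, hcar, hnorm⟩ := ih
    refine ⟨centSubloop hnorm, ?_, centSubloop_normal hnorm⟩
    rw [centSubloop_carrier, hcar]
    rfl

lemma subset_closure' (s : Set Q) : s ⊆ (closure s).carrier :=
  fun _ hx _ hT => hT hx

lemma closure_le {s : Set Q} {T : Subloop Q} (h : s ⊆ T.carrier) :
    (closure s).carrier ⊆ T.carrier := fun _ hx => hx T h

lemma one_mem_lower (Q : Type u) [Loop Q] : ∀ n : ℕ, (1 : Q) ∈ lowerSet Q n := by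
  intro n
  cases n with
  | zero => trivial
  | succ n => exact (closure _).one_mem

lemma key_iff (Q : Type u) [Loop Q] (n : ℕ) :
    lowerSet Q n = {1} ↔ upperSet Q n = Set.univ := by
  constructor
  · intro hl
    have step : ∀ i : ℕ, i ≤ n → lowerSet Q (n - i) ⊆ upperSet Q i := by
      intro i
      induction i with
      | zero =>
        intro _
        rw [Nat.sub_zero, hl]
        exact subset_of_eq rfl
      | succ i ih =>
        intro hle
        have ih' := ih (Nat.le_of_succ_le hle)
        intro a ha
        have hstep : ∀ z : Q, z ∈ caSet (lowerSet Q (n - (i+1))) → z ∈ upperSet Q i := by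
          intro z hz
          have h1 : caSet (lowerSet Q (n - (i+1))) ⊆ lowerSet Q (n - i) := by
            have e : n - i = (n - (i+1)) + 1 := by omega
            rw [e]
            exact subset_closure' _
          exact ih' (h1 hz)
        intro x y
        exact ⟨hstep _ ⟨a, ha, x, y, Or.inl rfl⟩,
               hstep _ ⟨a, ha, x, y, Or.inr (Or.inl rfl)⟩,
               hstep _ ⟨a, ha, x, y, Or.inr (Or.inr rfl)⟩⟩
    have := step n le_rfl
    rw [Nat.sub_self] at this
    exact Set.eq_univ_of_univ_subset this
  · intro hu
    have step : ∀ i : ℕ, i ≤ n → lowerSet Q i ⊆ upperSet Q (n - i) := by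
      intro i
      induction i with
      | zero =>
        intro _
        rw [Nat.sub_zero, hu]
        exact Set.subset_univ _
      | succ i ih =>
        intro hle
        have ih' := ih (Nat.le_of_succ_le hle)
        obtain ⟨S, hcar, _⟩ := upper_exists Q (n - (i+1))
        have hsub : caSet (lowerSet Q i) ⊆ upperSet Q (n - (i+1)) := by
          rintro z ⟨a, ha, x, y, hz⟩
          have haz : a ∈ upperSet Q (n - i) := ih' ha
          have e : n - i = (n - (i+1)) + 1 := by omega
          rw [e] at haz
          rcases hz with h | h | h <;> rw [h]
          · exact (haz x y).1
          · exact (haz x y).2.1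
          · exact (haz x y).2.2
        rw [← hcar] at hsub
        have := closure_le hsub
        rw [hcar] at this
        exact this
    have h1 := step n le_rfl
    rw [Nat.sub_self] at h1
    apply Set.eq_of_subset_of_subset h1
    intro z hz
    rw [hz]
    exact one_mem_lower Q n

end Loop

open Loop in
/-- the lower central series reaches `1` in exactly `n` steps iff
the upper central series reaches `Q` in exactly `n` steps. -/
theorem stmt_12 {Q : Type u} [Loop Q] (n : ℕ) :
    (lowerSet Q n = {1} ∧ ∀ m < n, lowerSet Q m ≠ {1}) ↔
    (upperSet Q n = Set.univ ∧ ∀ m < n, upperSet Q m ≠ Set.univ) := by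
  constructor
  · rintro ⟨h1, h2⟩
    exact ⟨(key_iff Q n).mp h1, fun m hm hc => h2 m hm ((key_iff Q m).mpr hc)⟩
  · rintro ⟨h1, h2⟩
    exact ⟨(key_iff Q n).mpr h1, fun m hm hc => h2 m hm ((key_iff Q m).mp hc)⟩
end

section
/- In an A-loop G that is centrally nilpotent of class 2, the commutator and the associator of type α are multiplicative in each argument: (ab,x) = (a,x)(b,x), (a,xy) = (a,x)(a,y), α(ab,x,y) = α(a,x,y)α(b,x,y), α(a,xy,z) = α(a,x,z)α(a,y,z), and α(a,x,yz) = α(a,x,y)α(a,x,z) for all a,b,x,y,z ∈ G. -/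
universe u

namespace Loop

variable {Q : Type u} [Loop Q]

theorem zc {z : Q} (hz : z ∈ center Q) (u : Q) : z * u = u * z := (hz u u).2.2.2
theorem z1 {z : Q} (hz : z ∈ center Q) (u v : Q) : z * (u * v) = z * u * v := (hz u v).1
theorem z2 {z : Q} (hz : z ∈ center Q) (u v : Q) : u * (z * v) = u * z * v := (hz u v).2.1
theorem z3 {z : Q} (hz : z ∈ center Q) (u v : Q) : u * (v * z) = u * v * z := (hz u v).2.2.1

theorem lcancel {u p q : Q} (h : u * p = u * q) : p = q := by
  have h2 := congrArg (ld u) h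
  rwa [ld_mul, ld_mul] at h2

theorem rcancel {u p q : Q} (h : p * u = q * u) : p = q := by
  have h2 := congrArg (fun w => rd w u) h
  rwa [rd_mul, rd_mul] at h2

theorem smid {z : Q} (hz : z ∈ center Q) (u v : Q) : u * z * v = u * v * z := by
  rw [← z2 hz, zc hz, z3 hz]

theorem mulmul {f g : Q} (hf : f ∈ center Q) (hg : g ∈ center Q) (a b : Q) :
    a * f * (b * g) = a * b * (f * g) := by
  rw [z3 hg, smid hf, ← z2 hf]

theorem center_mul {f g : Q} (hf : f ∈ center Q) (hg : g ∈ center Q) :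
    f * g ∈ center Q := by
  intro x y
  refine ⟨?_, ?_, ?_, ?_⟩
  · calc f * g * (x * y) = f * (g * (x * y)) := (z2 hg f (x * y)).symm
      _ = f * (g * x * y) := by rw [z1 hg]
      _ = f * (g * x) * y := z1 hf (g * x) y
      _ = f * g * x * y := by rw [z2 hg f x]
  · calc x * (f * g * y) = x * (f * (g * y)) := by rw [z2 hg f y]
      _ = x * f * (g * y) := z2 hf x (g * y)
      _ = x * f * g * y := z2 hg (x * f) y
      _ = x * (f * g) * y := by rw [z2 hf x g]
  · calc x * (y * (f * g)) = x * (y * f * g) := by rw [z2 hf y g]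
      _ = x * (y * f) * g := z3 hg x (y * f)
      _ = x * y * f * g := by rw [z3 hf x y]
      _ = x * y * (f * g) := (z2 hf (x * y) g).symm
  · calc f * g * x = f * (g * x) := (z2 hg f x).symm
      _ = f * (x * g) := by rw [zc hg x]
      _ = f * x * g := z3 hg f x
      _ = x * f * g := by rw [zc hf x]
      _ = x * (f * g) := (z2 hf x g).symm

section
variable (hc : ∀ a x y : Q, comm a x ∈ center Q ∧ aAlpha a x y ∈ center Q ∧
      aBeta a x y ∈ center Q)
include hc

theorem E1 (a x : Q) : a * x = x * a * comm a x := by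
  have hz : comm a x ∈ center Q := (hc a x x).1
  have h1 : a * comm a x = ld x (a * x) := mul_ld a (ld x (a * x))
  have h2 : x * (a * comm a x) = a * x := by rw [h1, mul_ld]
  rw [← h2, z3 hz]

theorem E2 (a x y : Q) : a * x * y = a * (x * y) * aAlpha a x y := by
  have hz : aAlpha a x y ∈ center Q := (hc a x y).2.1
  have h1 : a * aAlpha a x y = rd (a * x * y) (x * y) := mul_ld a _
  have h2 : a * aAlpha a x y * (x * y) = a * x * y := by rw [h1, mul_rd]
  rw [← h2, smid hz]

theorem E3 (a x y : Q) : x * (y * a) = x * y * a * aBeta a y x := by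
  have hz : aBeta a y x ∈ center Q := (hc a y x).2.2
  have h1 : aBeta a y x * a = ld (x * y) (x * (y * a)) := mul_rd _ a
  have h2 : x * y * (aBeta a y x * a) = x * (y * a) := by rw [h1, mul_ld]
  rw [← h2, zc hz, z3 hz]

end

theorem Tform (x c : Q) : innerT x c = c * comm c x :=
  (mul_ld c (ld x (c * x))).symm

theorem Rform (x y c : Q) : innerR x y c = c * aAlpha c x y :=
  (mul_ld c (rd (c * x * y) (x * y))).symm

theorem Lform (hc : ∀ a x y : Q, comm a x ∈ center Q ∧ aAlpha a x y ∈ center Q ∧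
      aBeta a x y ∈ center Q) (x y c : Q) : innerL x y c = c * aBeta c y x := by
  have hz : aBeta c y x ∈ center Q := (hc c y x).2.2
  have h1 : aBeta c y x * c = ld (x * y) (x * (y * c)) := mul_rd _ c
  calc innerL x y c = aBeta c y x * c := h1.symm
    _ = c * aBeta c y x := zc hz c

theorem Taut (hA : IsALoop Q) (x a b : Q) :
    innerT x (a * b) = innerT x a * innerT x b := by
  have h := hA (innerTEquiv x) (Subgroup.subset_closure (Or.inl ⟨x, rfl⟩)) a b
  simpa only [innerTEquiv, Equiv.coe_fn_mk] using h

theorem Raut (hA : IsALoop Q) (x y a b : Q) :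
    innerR x y (a * b) = innerR x y a * innerR x y b := by
  have h := hA (innerREquiv x y)
    (Subgroup.subset_closure (Or.inr (Or.inl ⟨x, y, rfl⟩))) a b
  simpa only [innerREquiv, Equiv.coe_fn_mk] using h

theorem Laut (hA : IsALoop Q) (x y a b : Q) :
    innerL x y (a * b) = innerL x y a * innerL x y b := by
  have h := hA (innerLEquiv x y)
    (Subgroup.subset_closure (Or.inr (Or.inr ⟨x, y, rfl⟩))) a b
  simpa only [innerLEquiv, Equiv.coe_fn_mk] using h

section
variable (hA : IsALoop Q)
variable (hc : ∀ a x y : Q, comm a x ∈ center Q ∧ aAlpha a x y ∈ center Q ∧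
      aBeta a x y ∈ center Q)
include hA hc

theorem commL (a b x : Q) : comm (a * b) x = comm a x * comm b x := by
  have hf := (hc a x x).1
  have hg := (hc b x x).1
  have h := Taut hA x a b
  rw [Tform, Tform, Tform, mulmul hf hg] at h
  exact lcancel h

theorem alphaL (a b x y : Q) :
    aAlpha (a * b) x y = aAlpha a x y * aAlpha b x y := by
  have hf := (hc a x y).2.1
  have hg := (hc b x y).2.1
  have h := Raut hA x y a b
  rw [Rform, Rform, Rform, mulmul hf hg] at h
  exact lcancel h

theorem betaL (a b x y : Q) :
    aBeta (a * b) y x = aBeta a y x * aBeta b y x := by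
  have hf := (hc a y x).2.2
  have hg := (hc b y x).2.2
  have h := Laut hA x y a b
  rw [Lform hc, Lform hc, Lform hc, mulmul hf hg] at h
  exact lcancel h

omit hA in
theorem AB1 (x y c : Q) : aAlpha x y c * aBeta c y x = 1 := by
  have hz : aAlpha x y c ∈ center Q := (hc x y c).2.1
  have h : x * (y * c) = x * (y * c) * (aAlpha x y c * aBeta c y x) := by
    calc x * (y * c) = x * y * c * aBeta c y x := E3 hc c x y
      _ = x * (y * c) * aAlpha x y c * aBeta c y x := by rw [E2 hc x y c]
      _ = x * (y * c) * (aAlpha x y c * aBeta c y x) := (z2 hz _ _).symm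
  have h2 : x * (y * c) * 1 = x * (y * c) * (aAlpha x y c * aBeta c y x) := by
    rw [mul_one]; exact h
  exact (lcancel h2).symm

theorem alphaR3 (u v p q : Q) :
    aAlpha u v (p * q) = aAlpha u v p * aAlpha u v q := by
  have hB1 := (hc p v u).2.2
  have hB2 := (hc q v u).2.2
  have e1 := AB1 hc u v p
  have e2 := AB1 hc u v q
  have em := AB1 hc u v (p * q)
  rw [betaL hA hc p q u v] at em
  have key : aAlpha u v (p * q) * (aBeta p v u * aBeta q v u)
      = aAlpha u v p * aAlpha u v q * (aBeta p v u * aBeta q v u) := by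
    rw [em, ← mulmul hB1 hB2, e1, e2, Loop.one_mul]
  exact rcancel key

theorem alphaM (a x y z : Q) :
    aAlpha a (x * y) z = aAlpha a x z * aAlpha a y z := by
  have hA1 := (hc a x y).2.1
  have hA4 := (hc x y z).2.1
  have hA5 := (hc a (x * y) z).2.1
  have hA7 := (hc a x (y * z)).2.1
  have hAxz := (hc a x z).2.1
  have hAyz := (hc a y z).2.1
  have exp1 : a * x * y * z
      = a * (x * (y * z)) * (aAlpha x y z * aAlpha a (x * y) z * aAlpha a x y) := by
    calc a * x * y * z = a * (x * y) * aAlpha a x y * z := by rw [E2 hc a x y]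
      _ = a * (x * y) * z * aAlpha a x y := smid hA1 _ z
      _ = a * (x * y * z) * aAlpha a (x * y) z * aAlpha a x y := by
          rw [E2 hc a (x * y) z]
      _ = a * (x * (y * z) * aAlpha x y z) * aAlpha a (x * y) z * aAlpha a x y := by
          rw [E2 hc x y z]
      _ = a * (x * (y * z)) * aAlpha x y z * aAlpha a (x * y) z * aAlpha a x y := by
          rw [z3 hA4 a (x * (y * z))]
      _ = a * (x * (y * z)) * (aAlpha x y z * aAlpha a (x * y) z) * aAlpha a x y := by
          rw [z2 hA4 (a * (x * (y * z))) (aAlpha a (x * y) z)]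
      _ = a * (x * (y * z)) * (aAlpha x y z * aAlpha a (x * y) z * aAlpha a x y) :=
          (z2 (center_mul hA4 hA5) _ _).symm
  have exp2 : a * x * y * z
      = a * (x * (y * z)) * (aAlpha a x (y * z) * aAlpha (a * x) y z) := by
    calc a * x * y * z = a * x * (y * z) * aAlpha (a * x) y z := E2 hc (a * x) y z
      _ = a * (x * (y * z)) * aAlpha a x (y * z) * aAlpha (a * x) y z := by
          rw [E2 hc a x (y * z)]
      _ = a * (x * (y * z)) * (aAlpha a x (y * z) * aAlpha (a * x) y z) :=
          (z2 hA7 _ _).symm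
  have key := lcancel (exp1.symm.trans exp2)
  rw [alphaL hA hc a x y z, alphaR3 hA hc a x y z] at key
  have shuf : aAlpha a x y * aAlpha a x z * (aAlpha a y z * aAlpha x y z)
      = aAlpha x y z * (aAlpha a x z * aAlpha a y z) * aAlpha a x y := by
    calc aAlpha a x y * aAlpha a x z * (aAlpha a y z * aAlpha x y z)
        = aAlpha a x y * aAlpha a x z * aAlpha a y z * aAlpha x y z :=
          z3 hA4 _ _
      _ = aAlpha a x y * (aAlpha a x z * aAlpha a y z) * aAlpha x y z := by
          rw [z2 hAxz (aAlpha a x y) (aAlpha a y z)]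
      _ = aAlpha a x z * aAlpha a y z * aAlpha a x y * aAlpha x y z := by
          rw [zc hA1 (aAlpha a x z * aAlpha a y z)]
      _ = aAlpha a x z * aAlpha a y z * aAlpha x y z * aAlpha a x y :=
          smid hA1 _ (aAlpha x y z)
      _ = aAlpha x y z * (aAlpha a x z * aAlpha a y z) * aAlpha a x y := by
          rw [zc hA4 (aAlpha a x z * aAlpha a y z)]
  rw [shuf] at key
  have k2 := rcancel key
  exact lcancel k2

theorem tri (a x b : Q) : aAlpha a x b = aAlpha x a b * aAlpha a b x := by
  have hc1 := (hc a x x).1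
  have hc3 := (hc b x x).1
  have haxb := (hc a x b).2.1
  have hxab := (hc x a b).2.1
  have habx := (hc a b x).2.1
  have P : a * (x * b) * aAlpha a x b = x * (a * b) * aAlpha x a b * comm a x := by
    calc a * (x * b) * aAlpha a x b = a * x * b := (E2 hc a x b).symm
      _ = x * a * comm a x * b := by rw [E1 hc a x]
      _ = x * a * b * comm a x := smid hc1 (x * a) b
      _ = x * (a * b) * aAlpha x a b * comm a x := by rw [E2 hc x a b]
  have Qq : a * (x * b) * (comm b x * aAlpha a b x)
      = x * (a * b) * (comm a x * comm b x) := by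
    calc a * (x * b) * (comm b x * aAlpha a b x)
        = a * (x * b) * comm b x * aAlpha a b x := z2 hc3 _ _
      _ = a * (x * b * comm b x) * aAlpha a b x := by rw [z3 hc3 a (x * b)]
      _ = a * (b * x) * aAlpha a b x := by rw [← E1 hc b x]
      _ = a * b * x := (E2 hc a b x).symm
      _ = x * (a * b) * comm (a * b) x := E1 hc (a * b) x
      _ = x * (a * b) * (comm a x * comm b x) := by rw [commL hA hc a b x]
  have comb : x * (a * b) * (comm a x * comm b x * aAlpha a x b)
      = x * (a * b) * (aAlpha x a b * comm a x * (comm b x * aAlpha a b x)) := by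
    calc x * (a * b) * (comm a x * comm b x * aAlpha a x b)
        = x * (a * b) * (comm a x * comm b x) * aAlpha a x b :=
          z2 (center_mul hc1 hc3) _ _
      _ = a * (x * b) * (comm b x * aAlpha a b x) * aAlpha a x b := by rw [← Qq]
      _ = a * (x * b) * (comm b x * aAlpha a b x * aAlpha a x b) :=
          (z2 (center_mul hc3 habx) _ _).symm
      _ = a * (x * b) * (aAlpha a x b * (comm b x * aAlpha a b x)) := by
          rw [zc haxb (comm b x * aAlpha a b x)]
      _ = a * (x * b) * aAlpha a x b * (comm b x * aAlpha a b x) := z2 haxb _ _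
      _ = x * (a * b) * aAlpha x a b * comm a x * (comm b x * aAlpha a b x) := by
          rw [P]
      _ = x * (a * b) * (aAlpha x a b * comm a x) * (comm b x * aAlpha a b x) := by
          rw [z2 hxab (x * (a * b)) (comm a x)]
      _ = x * (a * b) * (aAlpha x a b * comm a x * (comm b x * aAlpha a b x)) :=
          (z2 (center_mul hxab hc1) _ _).symm
  have key := lcancel comb
  have shuf : aAlpha x a b * comm a x * (comm b x * aAlpha a b x)
      = comm a x * comm b x * (aAlpha x a b * aAlpha a b x) := by
    calc aAlpha x a b * comm a x * (comm b x * aAlpha a b x)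
        = aAlpha x a b * comm a x * comm b x * aAlpha a b x := z3 habx _ _
      _ = aAlpha x a b * (comm a x * comm b x) * aAlpha a b x := by
          rw [z2 hc1 (aAlpha x a b) (comm b x)]
      _ = comm a x * comm b x * aAlpha x a b * aAlpha a b x := by
          rw [zc hxab (comm a x * comm b x)]
      _ = comm a x * comm b x * (aAlpha x a b * aAlpha a b x) :=
          (z2 hxab _ _).symm
  rw [shuf] at key
  exact lcancel key

theorem commR (a x y : Q) : comm a (x * y) = comm a x * comm a y := by
  have hc1 := (hc a x x).1
  have hc2 := (hc a y y).1
  have hC := (hc a (x * y) x).1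
  have hA1 := (hc a x y).2.1
  have hA2 := (hc x a y).2.1
  have hA3 := (hc x y a).2.1
  have exp1 : a * x * y
      = x * (y * a) * (aAlpha x y a * comm a (x * y) * aAlpha a x y) := by
    calc a * x * y = a * (x * y) * aAlpha a x y := E2 hc a x y
      _ = x * y * a * comm a (x * y) * aAlpha a x y := by rw [E1 hc a (x * y)]
      _ = x * (y * a) * aAlpha x y a * comm a (x * y) * aAlpha a x y := by
          rw [E2 hc x y a]
      _ = x * (y * a) * (aAlpha x y a * comm a (x * y)) * aAlpha a x y := by
          rw [z2 hA3 (x * (y * a)) (comm a (x * y))]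
      _ = x * (y * a) * (aAlpha x y a * comm a (x * y) * aAlpha a x y) :=
          (z2 (center_mul hA3 hC) _ _).symm
  have exp2 : a * x * y
      = x * (y * a) * (comm a y * aAlpha x a y * comm a x) := by
    calc a * x * y = x * a * comm a x * y := by rw [E1 hc a x]
      _ = x * a * y * comm a x := smid hc1 (x * a) y
      _ = x * (a * y) * aAlpha x a y * comm a x := by rw [E2 hc x a y]
      _ = x * (y * a * comm a y) * aAlpha x a y * comm a x := by rw [E1 hc a y]
      _ = x * (y * a) * comm a y * aAlpha x a y * comm a x := by
          rw [z3 hc2 x (y * a)]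
      _ = x * (y * a) * (comm a y * aAlpha x a y) * comm a x := by
          rw [z2 hc2 (x * (y * a)) (aAlpha x a y)]
      _ = x * (y * a) * (comm a y * aAlpha x a y * comm a x) :=
          (z2 (center_mul hc2 hA2) _ _).symm
  have key := lcancel (exp1.symm.trans exp2)
  rw [tri hA hc x a y] at key
  have shuf : comm a y * (aAlpha a x y * aAlpha x y a) * comm a x
      = aAlpha x y a * (comm a x * comm a y) * aAlpha a x y := by
    calc comm a y * (aAlpha a x y * aAlpha x y a) * comm a x
        = aAlpha a x y * aAlpha x y a * comm a y * comm a x := by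
          rw [zc hc2 (aAlpha a x y * aAlpha x y a)]
      _ = aAlpha a x y * aAlpha x y a * (comm a y * comm a x) :=
          (z2 hc2 _ _).symm
      _ = aAlpha a x y * aAlpha x y a * (comm a x * comm a y) := by
          rw [zc hc2 (comm a x)]
      _ = aAlpha a x y * (aAlpha x y a * (comm a x * comm a y)) :=
          (z2 hA3 _ _).symm
      _ = aAlpha x y a * (comm a x * comm a y) * aAlpha a x y :=
          zc hA1 _
  rw [shuf] at key
  have k2 := rcancel key
  exact lcancel k2

end

end Loop

open Loop in
/-- in an A-loop that is centrally nilpotent of class 2 (all commutators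
and associators of types α, β central), the commutator and α-associator are multiplicative. -/
theorem stmt_16 {Q : Type u} [Loop Q] (hA : IsALoop Q)
    (hc : ∀ a x y : Q, comm a x ∈ center Q ∧ aAlpha a x y ∈ center Q ∧
      aBeta a x y ∈ center Q)
    (a b x y z : Q) :
    comm (a * b) x = comm a x * comm b x ∧
    comm a (x * y) = comm a x * comm a y ∧
    aAlpha (a * b) x y = aAlpha a x y * aAlpha b x y ∧
    aAlpha a (x * y) z = aAlpha a x z * aAlpha a y z ∧
    aAlpha a x (y * z) = aAlpha a x y * aAlpha a x z :=
  ⟨commL hA hc a b x, commR hA hc a x y, alphaL hA hc a b x y,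
    alphaM hA hc a x y z, alphaR3 hA hc a x y z⟩
end
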